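/- arXiv:1908.01649 — 6 statements merged into one kernel-verified Lean document; each statement's English description precedes it below -/
import Mathlib

section
/- Let G be a finite group, let N be a non-abelian minimal normal subgroup of G, and let g1, g2 be elements of G with ⟨g1, g2⟩ = G. Then the set Φ_N(g1,g2) = {(n1, n2) ∈ N × N : ⟨g1·n1, g2·n2⟩ = G} has cardinality at least |N|. -/
private lemma conj_closure_top {G : Type*} [Group G] (a b c : G)
    (h : Subgroup.closure {a, b} = ⊤) :
    Subgroup.closure {c * a * c⁻¹, c * b * c⁻¹} = ⊤ := by
  have himg : ({c * a * c⁻¹, c * b * c⁻¹} : Set G)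
      = (MulAut.conj c).toMonoidHom '' {a, b} := by
    simp [Set.image_insert_eq, Set.image_singleton]
  rw [himg, ← MonoidHom.map_closure, h]
  exact Subgroup.map_top_of_surjective _ (MulAut.conj c).surjective

/-- Let `G` be a finite group, `N` a non-abelian minimal normal subgroup of `G`,
and `g1, g2 ∈ G` with `⟨g1, g2⟩ = G`. Then
`Φ_N(g1,g2) = {(n1,n2) ∈ N × N : ⟨g1·n1, g2·n2⟩ = G}` has cardinality at least `|N|`. -/
theorem stmt_0 {G : Type*} [Group G] [Finite G] (N : Subgroup G) [N.Normal]
    (hNne : N ≠ ⊥)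
    (hmin : ∀ M : Subgroup G, M.Normal → M ≤ N → M ≠ ⊥ → M = N)
    (hnonab : ¬ (∀ x ∈ N, ∀ y ∈ N, x * y = y * x))
    (g1 g2 : G) (hgen : Subgroup.closure {g1, g2} = ⊤) :
    Nat.card N ≤
      Nat.card {p : G × G | p.1 ∈ N ∧ p.2 ∈ N ∧
        Subgroup.closure {g1 * p.1, g2 * p.2} = ⊤} := by
  have hN : N.Normal := inferInstance
  -- center ∩ N is trivial
  have hZN : (Subgroup.center G ⊓ N) = ⊥ := by
    by_contra hne
    have := hmin (Subgroup.center G ⊓ N) inferInstance inf_le_right hne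
    apply hnonab
    intro x hx y hy
    have hxZ : x ∈ Subgroup.center G ⊓ N := this.ge hx
    exact (Subgroup.mem_center_iff.mp hxZ.1 y).symm
  -- the injection
  set S := {p : G × G | p.1 ∈ N ∧ p.2 ∈ N ∧
      Subgroup.closure {g1 * p.1, g2 * p.2} = ⊤} with hS
  have hmem : ∀ n : N, (g1⁻¹ * ((n : G)⁻¹ * g1 * n), g2⁻¹ * ((n : G)⁻¹ * g2 * n)) ∈ S := by
    intro n
    refine ⟨?_, ?_, ?_⟩
    · have h1 : g1⁻¹ * (n : G)⁻¹ * (g1⁻¹)⁻¹ ∈ N := hN.conj_mem _ (N.inv_mem n.2) _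
      have : g1⁻¹ * ((n : G)⁻¹ * g1 * n) = (g1⁻¹ * (n : G)⁻¹ * (g1⁻¹)⁻¹) * n := by
        group
      rw [this]; exact N.mul_mem h1 n.2
    · have h1 : g2⁻¹ * (n : G)⁻¹ * (g2⁻¹)⁻¹ ∈ N := hN.conj_mem _ (N.inv_mem n.2) _
      have : g2⁻¹ * ((n : G)⁻¹ * g2 * n) = (g2⁻¹ * (n : G)⁻¹ * (g2⁻¹)⁻¹) * n := by
        group
      rw [this]; exact N.mul_mem h1 n.2
    · have h1 : g1 * (g1⁻¹ * ((n : G)⁻¹ * g1 * n)) = (n : G)⁻¹ * g1 * ((n : G)⁻¹)⁻¹ := by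
        group
      have h2 : g2 * (g2⁻¹ * ((n : G)⁻¹ * g2 * n)) = (n : G)⁻¹ * g2 * ((n : G)⁻¹)⁻¹ := by
        group
      rw [h1, h2]
      exact conj_closure_top g1 g2 ((n : G)⁻¹) hgen
  let f : N → S := fun n => ⟨_, hmem n⟩
  have hinj : Function.Injective f := by
    intro n m hfnm
    have h := Subtype.ext_iff.mp hfnm
    have h1 : (n : G)⁻¹ * g1 * n = (m : G)⁻¹ * g1 * m := by
      have := congrArg Prod.fst h
      simpa using mul_left_cancel this
    have h2 : (n : G)⁻¹ * g2 * n = (m : G)⁻¹ * g2 * m := by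
      have := congrArg Prod.snd h
      simpa using mul_left_cancel this
    set c : G := (m : G) * (n : G)⁻¹ with hc
    have hc1 : Commute c g1 := by
      have : (m : G) * ((n : G)⁻¹ * g1 * n) * (n : G)⁻¹
          = (m : G) * ((m : G)⁻¹ * g1 * m) * (n : G)⁻¹ := by rw [h1]
      unfold c
      simpa [Commute, SemiconjBy, mul_assoc] using this
    have hc2 : Commute c g2 := by
      have : (m : G) * ((n : G)⁻¹ * g2 * n) * (n : G)⁻¹
          = (m : G) * ((m : G)⁻¹ * g2 * m) * (n : G)⁻¹ := by rw [h2]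
      unfold c
      simpa [Commute, SemiconjBy, mul_assoc] using this
    have hcZ : c ∈ Subgroup.center G := by
      rw [Subgroup.mem_center_iff]
      intro g
      have hg : g ∈ Subgroup.closure ({g1, g2} : Set G) := by rw [hgen]; trivial
      have : Commute c g := by
        induction hg using Subgroup.closure_induction with
        | mem x hx =>
          rcases hx with rfl | rfl
          · exact hc1
          · exact hc2
        | one => exact Commute.one_right c
        | mul x y _ _ ihx ihy => exact ihx.mul_right ihy
        | inv x _ ih => exact ih.inv_right
      exact this.symm
    have hcN : c ∈ N := N.mul_mem m.2 (N.inv_mem n.2)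
    have : c ∈ (Subgroup.center G ⊓ N) := ⟨hcZ, hcN⟩
    rw [hZN, Subgroup.mem_bot] at this
    have hmn : (m : G) = (n : G) := mul_inv_eq_one.mp this
    exact (Subtype.ext hmn).symm
  haveI : Finite S := Set.Finite.to_subtype (Set.toFinite S)
  exact Nat.card_le_card_of_injective f hinj
end

section
/- Let G be a finite 2-generated group and let N be an abelian minimal normal subgroup of G, so that |N| = p^a for some prime p and positive integer a. Let c be the number of complements of N in G, and let g1, g2 be elements of G with ⟨g1, g2⟩N = G. Then the set Φ_N(g1,g2) = {(n1, n2) ∈ N × N : ⟨g1·n1, g2·n2⟩ = G} has cardinality exactly p^{2a} − c; moreover c < p^{2a}, so that |Φ_N(g1,g2)| ≥ p^{2a} − p^{2a−1}. -/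
open Subgroup Pointwise
set_option linter.unusedSectionVars false
set_option maxHeartbeats 1000000

section aux
variable {G : Type*} [Group G] {N : Subgroup G} [N.Normal]


/-- For a complement `H` of `N`, each `g` has a unique `n ∈ N` with `g*n ∈ H`. -/
lemma compl_exists_unique {H : Subgroup G} (hi : H ⊓ N = ⊥) (hs : H ⊔ N = ⊤) (g : G) :
    ∃! n : G, n ∈ N ∧ g * n ∈ H := by
  have hg : g ∈ (H : Set G) * (N : Set G) := by
    rw [← Subgroup.mul_normal, hs]; trivial
  obtain ⟨h, hh, n, hn, hhn⟩ := Set.mem_mul.mp hg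
  refine ⟨n⁻¹, ⟨inv_mem hn, by rw [← hhn]; simpa using hh⟩, ?_⟩
  rintro m ⟨hm, hgm⟩
  have h1 : (g * n⁻¹)⁻¹ * (g * m) ∈ H := mul_mem (inv_mem (by rw [← hhn]; simpa using hh)) hgm
  have h2 : (g * n⁻¹)⁻¹ * (g * m) = n * m := by group
  have h3 : n * m = 1 := by
    have hmem : n * m ∈ H ⊓ N := ⟨h2 ▸ h1, mul_mem hn hm⟩
    rw [hi, Subgroup.mem_bot] at hmem
    exact hmem
  exact eq_inv_of_mul_eq_one_right h3

lemma sup_closure_mul {g1 g2 n1 n2 : G} (hgen : Subgroup.closure {g1, g2} ⊔ N = ⊤)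
    (h1 : n1 ∈ N) (h2 : n2 ∈ N) :
    Subgroup.closure {g1 * n1, g2 * n2} ⊔ N = ⊤ := by
  have key : Subgroup.closure {g1, g2} ≤ Subgroup.closure {g1 * n1, g2 * n2} ⊔ N := by
    rw [Subgroup.closure_le]
    intro x hx
    simp only [Set.mem_insert_iff, Set.mem_singleton_iff] at hx
    cases hx with
    | inl h =>
      rw [h]
      have : (g1 * n1) * n1⁻¹ ∈ Subgroup.closure {g1 * n1, g2 * n2} ⊔ N :=
        mul_mem (le_sup_left (α := Subgroup G) (subset_closure (by simp)))
          (le_sup_right (α := Subgroup G) (inv_mem h1))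
      simpa using this
    | inr h =>
      rw [h]
      have : (g2 * n2) * n2⁻¹ ∈ Subgroup.closure {g1 * n1, g2 * n2} ⊔ N :=
        mul_mem (le_sup_left (α := Subgroup G) (subset_closure (by simp)))
          (le_sup_right (α := Subgroup G) (inv_mem h2))
      simpa using this
  rw [← top_le_iff, ← hgen]
  exact sup_le (key.trans le_rfl) le_sup_right



lemma inf_eq_bot_of_ne_top (hNne : N ≠ ⊥)
    (hmin : ∀ M : Subgroup G, M.Normal → M ≤ N → M ≠ ⊥ → M = N)
    (hab : ∀ x ∈ N, ∀ y ∈ N, x * y = y * x)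
    {H : Subgroup G} (hs : H ⊔ N = ⊤) (hne : H ≠ ⊤) : H ⊓ N = ⊥ := by
  by_contra hbot
  have hnorm : (H ⊓ N).Normal := by
    constructor
    intro n hn g
    have hg : g ∈ (H : Set G) * (N : Set G) := by rw [← Subgroup.mul_normal, hs]; trivial
    obtain ⟨h, hh, m, hm, rfl⟩ := Set.mem_mul.mp hg
    have hmn : m * n * m⁻¹ = n := by
      rw [hab m hm n (Subgroup.mem_inf.mp hn).2]; group
    have : (h * m) * n * (h * m)⁻¹ = h * n * h⁻¹ := by
      rw [mul_inv_rev]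
      calc h * m * n * (m⁻¹ * h⁻¹) = h * (m * n * m⁻¹) * h⁻¹ := by group
      _ = h * n * h⁻¹ := by rw [hmn]
    rw [this]
    exact Subgroup.mem_inf.mpr ⟨mul_mem (mul_mem hh (Subgroup.mem_inf.mp hn).1) (inv_mem hh), Subgroup.Normal.conj_mem ‹N.Normal› n (Subgroup.mem_inf.mp hn).2 h⟩
  have heq : H ⊓ N = N := hmin _ hnorm inf_le_right hbot
  have hNH : N ≤ H := heq ▸ inf_le_left
  exact hne (by rw [← hs, sup_eq_left.mpr hNH])

/-- Dedekind-style: if `H ≤ K`, `K ⊓ N = ⊥`, `H ⊔ N = ⊤` then `H = K`. -/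
lemma eq_of_le_compl {H K : Subgroup G} (hHK : H ≤ K) (hi : K ⊓ N = ⊥) (hs : H ⊔ N = ⊤) :
    H = K := by
  refine le_antisymm hHK fun k hk => ?_
  have hg : k ∈ (H : Set G) * (N : Set G) := by rw [← Subgroup.mul_normal, hs]; trivial
  obtain ⟨h, hh, n, hn, rfl⟩ := Set.mem_mul.mp hg
  have : n ∈ K ⊓ N := Subgroup.mem_inf.mpr ⟨by simpa using mul_mem (inv_mem (hHK hh)) hk, hn⟩
  rw [hi, Subgroup.mem_bot] at this
  rw [this, mul_one]
  exact hh



section dfun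
variable {H : Subgroup G} {d : G → G}
  (hd : ∀ g, d g ∈ N ∧ g * d g ∈ H)
  (hu : ∀ g n, n ∈ N → g * n ∈ H → n = d g)

include hd hu

lemma dfun_cocycle (x y : G) : d (x * y) = y⁻¹ * d x * y * d y := by
  have hnN : y⁻¹ * d x * y * d y ∈ N := by
    refine mul_mem ?_ (hd y).1
    have := Subgroup.Normal.conj_mem ‹N.Normal› (d x) (hd x).1 y⁻¹
    simpa [mul_assoc] using this
  have hmem : (x * y) * (y⁻¹ * d x * y * d y) ∈ H := by
    have : (x * y) * (y⁻¹ * d x * y * d y) = (x * d x) * (y * d y) := by group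
    rw [this]
    exact mul_mem (hd x).2 (hd y).2
  exact (hu _ _ hnN hmem).symm

lemma dfun_mul_right (g n : G) (hn : n ∈ N) : d (g * n) = n⁻¹ * d g := by
  have hnN : n⁻¹ * d g ∈ N := mul_mem (inv_mem hn) (hd g).1
  have hmem : (g * n) * (n⁻¹ * d g) ∈ H := by
    have : (g * n) * (n⁻¹ * d g) = g * d g := by group
    rw [this]; exact (hd g).2
  exact (hu _ _ hnN hmem).symm

lemma dfun_one : d 1 = 1 :=
  (hu 1 1 (one_mem N) (by simpa using one_mem H)).symm

lemma dfun_mem (n : G) (hn : n ∈ N) : d n = n⁻¹ := by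
  have := dfun_mul_right hd hu 1 n hn
  simpa [dfun_one hd hu] using this

lemma dfun_inv (x : G) : d x⁻¹ = x * (d x)⁻¹ * x⁻¹ := by
  have h1 : d 1 = x * d x * x⁻¹ * d x⁻¹ := by simpa using dfun_cocycle hd hu x x⁻¹
  rw [dfun_one hd hu] at h1
  have h2 : d x⁻¹ = (x * d x * x⁻¹)⁻¹ := eq_inv_of_mul_eq_one_right h1.symm
  rw [h2]; group

end dfun


variable (N) in
/-- A 1-cocycle `G → N` that is constant on `N`-cosets. -/
def IsCoc (σ : G → G) : Prop :=
  (∀ g, σ g ∈ N) ∧ (∀ x y, σ (x * y) = y⁻¹ * σ x * y * σ y) ∧ (∀ g n, n ∈ N → σ (g * n) = σ g)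

lemma isCoc_const_one : IsCoc N (fun _ => (1 : G)) :=
  ⟨fun _ => one_mem N, fun x y => by group, fun _ _ _ => rfl⟩

lemma IsCoc.val_one {σ : G → G} (h : IsCoc N σ) : σ 1 = 1 := by
  have := h.2.1 1 1
  simp only [mul_one, inv_one, one_mul] at this
  exact mul_eq_left.mp this.symm

lemma IsCoc.val_inv {σ : G → G} (h : IsCoc N σ) (x : G) : σ x⁻¹ = x * (σ x)⁻¹ * x⁻¹ := by
  have h1 : σ 1 = x * σ x * x⁻¹ * σ x⁻¹ := by simpa using h.2.1 x x⁻¹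
  rw [h.val_one] at h1
  have h2 : σ x⁻¹ = (x * σ x * x⁻¹)⁻¹ := eq_inv_of_mul_eq_one_right h1.symm
  rw [h2]; group

lemma IsCoc.val_mem {σ : G → G} (h : IsCoc N σ) {n : G} (hn : n ∈ N) : σ n = 1 := by
  have := h.2.2 1 n hn
  rw [one_mul] at this
  rw [this, h.val_one]

lemma IsCoc.mul (hab : ∀ x ∈ N, ∀ y ∈ N, x * y = y * x)
    {σ τ : G → G} (hσ : IsCoc N σ) (hτ : IsCoc N τ) :
    IsCoc N (fun g => σ g * τ g) := by
  refine ⟨fun g => mul_mem (hσ.1 g) (hτ.1 g), fun x y => ?_, fun g n hn => by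
    simp only [hσ.2.2 g n hn, hτ.2.2 g n hn]⟩
  simp only [hσ.2.1 x y, hτ.2.1 x y]
  have hB : σ y ∈ N := hσ.1 y
  have hC : y⁻¹ * τ x * y ∈ N := by
    have := Subgroup.Normal.conj_mem ‹N.Normal› (τ x) (hτ.1 x) y⁻¹
    simpa [mul_assoc] using this
  calc y⁻¹ * σ x * y * σ y * (y⁻¹ * τ x * y * τ y)
      = y⁻¹ * σ x * y * (σ y * (y⁻¹ * τ x * y)) * τ y := by group
    _ = y⁻¹ * σ x * y * ((y⁻¹ * τ x * y) * σ y) * τ y := by rw [hab _ hB _ hC]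
    _ = y⁻¹ * (σ x * τ x) * y * (σ y * τ y) := by group

lemma IsCoc.inv (hab : ∀ x ∈ N, ∀ y ∈ N, x * y = y * x)
    {σ : G → G} (hσ : IsCoc N σ) : IsCoc N (fun g => (σ g)⁻¹) := by
  refine ⟨fun g => inv_mem (hσ.1 g), fun x y => ?_, fun g n hn => by
    show (σ (g * n))⁻¹ = (σ g)⁻¹; rw [hσ.2.2 g n hn]⟩
  show (σ (x * y))⁻¹ = y⁻¹ * (σ x)⁻¹ * y * (σ y)⁻¹
  rw [hσ.2.1 x y]
  have hB : (σ y)⁻¹ ∈ N := inv_mem (hσ.1 y)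
  have hC : y⁻¹ * (σ x)⁻¹ * y ∈ N := by
    have := Subgroup.Normal.conj_mem ‹N.Normal› (σ x)⁻¹ (inv_mem (hσ.1 x)) y⁻¹
    simpa [mul_assoc] using this
  calc (y⁻¹ * σ x * y * σ y)⁻¹
      = (σ y)⁻¹ * (y⁻¹ * (σ x)⁻¹ * y) := by group
    _ = (y⁻¹ * (σ x)⁻¹ * y) * (σ y)⁻¹ := by rw [hab _ hB _ hC]
    _ = y⁻¹ * (σ x)⁻¹ * y * (σ y)⁻¹ := by group

/-- The difference of two complement-sections is a cocycle. -/
lemma isCoc_diff (hab : ∀ x ∈ N, ∀ y ∈ N, x * y = y * x)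
    {H H₀ : Subgroup G} {d d₀ : G → G}
    (hd : ∀ g, d g ∈ N ∧ g * d g ∈ H) (hu : ∀ g n, n ∈ N → g * n ∈ H → n = d g)
    (hd₀ : ∀ g, d₀ g ∈ N ∧ g * d₀ g ∈ H₀) (hu₀ : ∀ g n, n ∈ N → g * n ∈ H₀ → n = d₀ g) :
    IsCoc N (fun g => d g * (d₀ g)⁻¹) := by
  refine ⟨fun g => mul_mem (hd g).1 (inv_mem (hd₀ g).1), fun x y => ?_, fun g n hn => ?_⟩
  · show d (x * y) * (d₀ (x * y))⁻¹ = y⁻¹ * (d x * (d₀ x)⁻¹) * y * (d y * (d₀ y)⁻¹)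
    rw [dfun_cocycle hd hu x y, dfun_cocycle hd₀ hu₀ x y]
    have hB : d y ∈ N := (hd y).1
    have hD : d₀ y ∈ N := (hd₀ y).1
    have hC : y⁻¹ * (d₀ x)⁻¹ * y ∈ N := by
      have := Subgroup.Normal.conj_mem ‹N.Normal› (d₀ x)⁻¹ (inv_mem (hd₀ x).1) y⁻¹
      simpa [mul_assoc] using this
    have hBD : d y * (d₀ y)⁻¹ ∈ N := mul_mem hB (inv_mem hD)
    calc y⁻¹ * d x * y * d y * (y⁻¹ * d₀ x * y * d₀ y)⁻¹
        = y⁻¹ * d x * y * ((d y * (d₀ y)⁻¹) * (y⁻¹ * (d₀ x)⁻¹ * y)) := by group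
      _ = y⁻¹ * d x * y * ((y⁻¹ * (d₀ x)⁻¹ * y) * (d y * (d₀ y)⁻¹)) := by
          rw [hab _ hBD _ hC]
      _ = y⁻¹ * (d x * (d₀ x)⁻¹) * y * (d y * (d₀ y)⁻¹) := by group
  · show d (g * n) * (d₀ (g * n))⁻¹ = d g * (d₀ g)⁻¹
    rw [dfun_mul_right hd hu g n hn, dfun_mul_right hd₀ hu₀ g n hn]
    have h1 : d g ∈ N := (hd g).1
    calc n⁻¹ * d g * (n⁻¹ * d₀ g)⁻¹ = n⁻¹ * ((d g * (d₀ g)⁻¹) * n) := by group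
      _ = n⁻¹ * (n * (d g * (d₀ g)⁻¹)) := by
          rw [hab _ (mul_mem h1 (inv_mem (hd₀ g).1)) _ hn]
      _ = d g * (d₀ g)⁻¹ := by group

lemma ne_top_of_compl (hNne : N ≠ ⊥) {H : Subgroup G} (hi : H ⊓ N = ⊥) : H ≠ ⊤ := by
  intro h
  exact hNne (by rw [← hi, h, top_inf_eq])

lemma card_NG (hNne : N ≠ ⊥)
    (hmin : ∀ M : Subgroup G, M.Normal → M ≤ N → M ≠ ⊥ → M = N)
    (hab : ∀ x ∈ N, ∀ y ∈ N, x * y = y * x)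
    (g1 g2 : G) (hgen : Subgroup.closure {g1, g2} ⊔ N = ⊤) :
    Nat.card {q : G × G | q.1 ∈ N ∧ q.2 ∈ N ∧ Subgroup.closure {g1 * q.1, g2 * q.2} ≠ ⊤}
      = Nat.card {H : Subgroup G // H ⊓ N = ⊥ ∧ H ⊔ N = ⊤} := by
  have hcompl : ∀ q : G × G, q.1 ∈ N → q.2 ∈ N →
      Subgroup.closure {g1 * q.1, g2 * q.2} ≠ ⊤ →
      Subgroup.closure {g1 * q.1, g2 * q.2} ⊓ N = ⊥ ∧
        Subgroup.closure {g1 * q.1, g2 * q.2} ⊔ N = ⊤ := by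
    intro q h1 h2 hne
    have hs := sup_closure_mul (N := N) hgen h1 h2
    exact ⟨inf_eq_bot_of_ne_top hNne hmin hab hs hne, hs⟩
  let f : {q : G × G | q.1 ∈ N ∧ q.2 ∈ N ∧ Subgroup.closure {g1 * q.1, g2 * q.2} ≠ ⊤}
      → {H : Subgroup G // H ⊓ N = ⊥ ∧ H ⊔ N = ⊤} :=
    fun q => ⟨Subgroup.closure {g1 * q.1.1, g2 * q.1.2}, hcompl q.1 q.2.1 q.2.2.1 q.2.2.2⟩
  have hbij : Function.Bijective f := by
    constructor
    · rintro ⟨⟨n1, n2⟩, hn1, hn2, hne⟩ ⟨⟨m1, m2⟩, hm1, hm2, hme⟩ heq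
      have hH := congrArg Subtype.val heq
      simp only [f] at hH
      have hc := hcompl (n1, n2) hn1 hn2 hne
      have e1 : n1 = m1 := by
        refine ExistsUnique.unique (compl_exists_unique hc.1 hc.2 g1)
          ⟨hn1, Subgroup.subset_closure (by simp)⟩ ⟨hm1, ?_⟩
        rw [hH]
        exact Subgroup.subset_closure (by simp)
      have e2 : n2 = m2 := by
        refine ExistsUnique.unique (compl_exists_unique hc.1 hc.2 g2)
          ⟨hn2, Subgroup.subset_closure (by simp)⟩ ⟨hm2, ?_⟩
        rw [hH]
        exact Subgroup.subset_closure (by simp)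
      subst e1; subst e2; rfl
    · rintro ⟨H, hH⟩
      obtain ⟨n1, hn1, -⟩ := (compl_exists_unique hH.1 hH.2 g1)
      obtain ⟨n2, hn2, -⟩ := (compl_exists_unique hH.1 hH.2 g2)
      have hle : Subgroup.closure {g1 * n1, g2 * n2} ≤ H := by
        rw [Subgroup.closure_le]
        rintro x hx
        simp only [Set.mem_insert_iff, Set.mem_singleton_iff] at hx
        rcases hx with h | h
        · rw [h]; exact hn1.2
        · rw [h]; exact hn2.2
      have heq : Subgroup.closure {g1 * n1, g2 * n2} = H :=
        eq_of_le_compl hle hH.1 (sup_closure_mul hgen hn1.1 hn2.1)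
      refine ⟨⟨(n1, n2), hn1.1, hn2.1, ?_⟩, ?_⟩
      · rw [heq]; exact ne_top_of_compl hNne hH.1
      · exact Subtype.ext heq
  exact Nat.card_congr (Equiv.ofBijective f hbij)


lemma card_split [Finite G] (g1 g2 : G) :
    Nat.card {q : G × G | q.1 ∈ N ∧ q.2 ∈ N ∧ Subgroup.closure {g1 * q.1, g2 * q.2} = ⊤}
      + Nat.card {q : G × G | q.1 ∈ N ∧ q.2 ∈ N ∧ Subgroup.closure {g1 * q.1, g2 * q.2} ≠ ⊤}
      = Nat.card N * Nat.card N := by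
  classical
  set Φ : Set (G × G) :=
    {q : G × G | q.1 ∈ N ∧ q.2 ∈ N ∧ Subgroup.closure {g1 * q.1, g2 * q.2} = ⊤} with hΦ
  set Ψ : Set (G × G) :=
    {q : G × G | q.1 ∈ N ∧ q.2 ∈ N ∧ Subgroup.closure {g1 * q.1, g2 * q.2} ≠ ⊤} with hΨ
  have hunion : Φ ∪ Ψ = {q : G × G | q.1 ∈ N ∧ q.2 ∈ N} := by
    ext q
    simp only [hΦ, hΨ, Set.mem_union, Set.mem_setOf_eq]
    by_cases h : Subgroup.closure {g1 * q.1, g2 * q.2} = ⊤ <;> tauto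
  have hdisj : Disjoint Φ Ψ := by
    rw [Set.disjoint_left]
    rintro q ⟨-, -, h⟩ ⟨-, -, h'⟩
    exact h' h
  have hP : Nat.card {q : G × G | q.1 ∈ N ∧ q.2 ∈ N} = Nat.card N * Nat.card N := by
    have e : {q : G × G | q.1 ∈ N ∧ q.2 ∈ N} ≃ N × N := Equiv.subtypeProdEquivProd
    rw [Nat.card_congr e, Nat.card_prod]
  rw [Nat.card_coe_set_eq, Nat.card_coe_set_eq, ← Set.ncard_union_eq hdisj
    (Set.toFinite _) (Set.toFinite _), hunion, ← Nat.card_coe_set_eq, hP]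
/-- The complement associated to a cocycle `σ`, relative to a base complement with
section `d₀`. -/
def cocSub (hab : ∀ x ∈ N, ∀ y ∈ N, x * y = y * x)
    {H₀ : Subgroup G} {d₀ : G → G}
    (hd₀ : ∀ g, d₀ g ∈ N ∧ g * d₀ g ∈ H₀) (hu₀ : ∀ g n, n ∈ N → g * n ∈ H₀ → n = d₀ g)
    {σ : G → G} (hσ : IsCoc N σ) : Subgroup G where
  carrier := {x : G | σ x * d₀ x = 1}
  one_mem' := by
    show σ 1 * d₀ 1 = 1
    rw [hσ.val_one, dfun_one hd₀ hu₀, one_mul]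
  mul_mem' := by
    intro x y hx hy
    show σ (x * y) * d₀ (x * y) = 1
    have hx' : σ x * d₀ x = 1 := hx
    have hy' : σ y * d₀ y = 1 := hy
    rw [hσ.2.1 x y, dfun_cocycle hd₀ hu₀ x y]
    have hB : σ y ∈ N := hσ.1 y
    have hC : y⁻¹ * d₀ x * y ∈ N := by
      have := Subgroup.Normal.conj_mem ‹N.Normal› (d₀ x) (hd₀ x).1 y⁻¹
      simpa [mul_assoc] using this
    calc y⁻¹ * σ x * y * σ y * (y⁻¹ * d₀ x * y * d₀ y)
        = y⁻¹ * σ x * y * (σ y * (y⁻¹ * d₀ x * y)) * d₀ y := by group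
      _ = y⁻¹ * σ x * y * ((y⁻¹ * d₀ x * y) * σ y) * d₀ y := by rw [hab _ hB _ hC]
      _ = y⁻¹ * (σ x * d₀ x) * y * (σ y * d₀ y) := by group
      _ = 1 := by rw [hx', hy']; group
  inv_mem' := by
    intro x hx
    show σ x⁻¹ * d₀ x⁻¹ = 1
    have hx' : σ x * d₀ x = 1 := hx
    rw [hσ.val_inv x, dfun_inv hd₀ hu₀ x]
    calc x * (σ x)⁻¹ * x⁻¹ * (x * (d₀ x)⁻¹ * x⁻¹)
        = x * (d₀ x * σ x)⁻¹ * x⁻¹ := by group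
      _ = x * (σ x * d₀ x)⁻¹ * x⁻¹ := by rw [hab _ (hd₀ x).1 _ (hσ.1 x)]
      _ = 1 := by rw [hx']; group

lemma mem_cocSub (hab : ∀ x ∈ N, ∀ y ∈ N, x * y = y * x)
    {H₀ : Subgroup G} {d₀ : G → G}
    (hd₀ : ∀ g, d₀ g ∈ N ∧ g * d₀ g ∈ H₀) (hu₀ : ∀ g n, n ∈ N → g * n ∈ H₀ → n = d₀ g)
    {σ : G → G} (hσ : IsCoc N σ) (x : G) :
    x ∈ cocSub hab hd₀ hu₀ hσ ↔ σ x * d₀ x = 1 := Iff.rfl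
lemma card_NG_dvd [Finite G] (hNne : N ≠ ⊥)
    (hmin : ∀ M : Subgroup G, M.Normal → M ≤ N → M ≠ ⊥ → M = N)
    (hab : ∀ x ∈ N, ∀ y ∈ N, x * y = y * x)
    (g1 g2 : G) (hgen : Subgroup.closure {g1, g2} ⊔ N = ⊤)
    {H₀ : Subgroup G} (hi₀ : H₀ ⊓ N = ⊥) (hs₀ : H₀ ⊔ N = ⊤) :
    Nat.card {q : G × G | q.1 ∈ N ∧ q.2 ∈ N ∧ Subgroup.closure {g1 * q.1, g2 * q.2} ≠ ⊤}
      ∣ Nat.card N * Nat.card N := by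
  classical
  set d₀ : G → G := fun g => (compl_exists_unique hi₀ hs₀ g).choose with hd₀def
  have hd₀ : ∀ g, d₀ g ∈ N ∧ g * d₀ g ∈ H₀ :=
    fun g => (compl_exists_unique hi₀ hs₀ g).choose_spec.1
  have hu₀ : ∀ g n, n ∈ N → g * n ∈ H₀ → n = d₀ g :=
    fun g n hn hm => (compl_exists_unique hi₀ hs₀ g).choose_spec.2 n ⟨hn, hm⟩
  set S : Subgroup (G × G) :=
    { carrier := {q : G × G | ∃ σ : G → G, IsCoc N σ ∧ σ g1 = q.1 ∧ σ g2 = q.2},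
      one_mem' := ⟨fun _ => 1, isCoc_const_one, rfl, rfl⟩,
      mul_mem' := by
        rintro q r ⟨σ, hσ, h1, h2⟩ ⟨τ, hτ, k1, k2⟩
        exact ⟨fun g => σ g * τ g, IsCoc.mul hab hσ hτ,
          by rw [Prod.fst_mul, ← h1, ← k1], by rw [Prod.snd_mul, ← h2, ← k2]⟩,
      inv_mem' := by
        rintro q ⟨σ, hσ, h1, h2⟩
        exact ⟨fun g => (σ g)⁻¹, IsCoc.inv hab hσ,
          by rw [Prod.fst_inv, ← h1], by rw [Prod.snd_inv, ← h2]⟩ } with hSdef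
  have hSle : S ≤ N.prod N := by
    rintro q ⟨σ, hσ, h1, h2⟩
    exact Subgroup.mem_prod.mpr ⟨h1 ▸ hσ.1 g1, h2 ▸ hσ.1 g2⟩
  have himg : {q : G × G | q.1 ∈ N ∧ q.2 ∈ N ∧ Subgroup.closure {g1 * q.1, g2 * q.2} ≠ ⊤}
      = (fun q : G × G => (d₀ g1 * q.1, d₀ g2 * q.2)) '' (S : Set (G × G)) := by
    ext q
    constructor
    · rintro ⟨hq1, hq2, hne⟩
      have hs : Subgroup.closure {g1 * q.1, g2 * q.2} ⊔ N = ⊤ := sup_closure_mul hgen hq1 hq2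
      have hi : Subgroup.closure {g1 * q.1, g2 * q.2} ⊓ N = ⊥ :=
        inf_eq_bot_of_ne_top hNne hmin hab hs hne
      set d : G → G := fun g => (compl_exists_unique hi hs g).choose with hddef
      have hd : ∀ g, d g ∈ N ∧ g * d g ∈ Subgroup.closure {g1 * q.1, g2 * q.2} :=
        fun g => (compl_exists_unique hi hs g).choose_spec.1
      have hu : ∀ g n, n ∈ N → g * n ∈ Subgroup.closure {g1 * q.1, g2 * q.2} → n = d g :=
        fun g n hn hm => (compl_exists_unique hi hs g).choose_spec.2 n ⟨hn, hm⟩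
      have hσ : IsCoc N (fun g => d g * (d₀ g)⁻¹) := isCoc_diff hab hd hu hd₀ hu₀
      refine ⟨(d g1 * (d₀ g1)⁻¹, d g2 * (d₀ g2)⁻¹),
        ⟨fun g => d g * (d₀ g)⁻¹, hσ, rfl, rfl⟩, ?_⟩
      have e1 : d g1 = q.1 :=
        (hu g1 q.1 hq1 (Subgroup.subset_closure (by simp))).symm
      have e2 : d g2 = q.2 :=
        (hu g2 q.2 hq2 (Subgroup.subset_closure (by simp))).symm
      have c1 : d₀ g1 * (d g1 * (d₀ g1)⁻¹) = q.1 := by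
        rw [e1, ← mul_assoc, hab _ (hd₀ g1).1 _ hq1]; group
      have c2 : d₀ g2 * (d g2 * (d₀ g2)⁻¹) = q.2 := by
        rw [e2, ← mul_assoc, hab _ (hd₀ g2).1 _ hq2]; group
      exact Prod.ext c1 c2
    · rintro ⟨r, ⟨σ, hσ, h1, h2⟩, rfl⟩
      show d₀ g1 * r.1 ∈ N ∧ d₀ g2 * r.2 ∈ N ∧
        Subgroup.closure {g1 * (d₀ g1 * r.1), g2 * (d₀ g2 * r.2)} ≠ ⊤
      rw [← h1, ← h2]
      have hn1 : d₀ g1 * σ g1 ∈ N := mul_mem (hd₀ g1).1 (hσ.1 g1)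
      have hn2 : d₀ g2 * σ g2 ∈ N := mul_mem (hd₀ g2).1 (hσ.1 g2)
      refine ⟨hn1, hn2, ?_⟩
      have hle : Subgroup.closure {g1 * (d₀ g1 * σ g1), g2 * (d₀ g2 * σ g2)}
          ≤ cocSub hab hd₀ hu₀ hσ := by
        rw [Subgroup.closure_le]
        rintro x hx
        simp only [Set.mem_insert_iff, Set.mem_singleton_iff] at hx
        rcases hx with h | h
        · rw [h, SetLike.mem_coe, mem_cocSub, hσ.2.2 g1 _ hn1,
            dfun_mul_right hd₀ hu₀ g1 _ hn1]
          group
        · rw [h, SetLike.mem_coe, mem_cocSub, hσ.2.2 g2 _ hn2,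
            dfun_mul_right hd₀ hu₀ g2 _ hn2]
          group
      have hne_top : cocSub hab hd₀ hu₀ hσ ≠ ⊤ := by
        obtain ⟨n₀, hn₀⟩ := Subgroup.ne_bot_iff_exists_ne_one.mp hNne
        intro htop
        have hmem : (n₀ : G) ∈ cocSub hab hd₀ hu₀ hσ := htop ▸ Subgroup.mem_top _
        rw [mem_cocSub, hσ.val_mem n₀.2, dfun_mem hd₀ hu₀ _ n₀.2, one_mul] at hmem
        exact hn₀ (by ext; simpa using inv_eq_one.mp hmem)
      intro htop
      exact hne_top (top_le_iff.mp (htop ▸ hle))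
  have hinj : Function.Injective (fun q : G × G => (d₀ g1 * q.1, d₀ g2 * q.2)) := by
    intro x y h
    have h' := Prod.ext_iff.mp h
    simp only at h'
    exact Prod.ext (mul_left_cancel h'.1) (mul_left_cancel h'.2)
  rw [Nat.card_coe_set_eq, himg, Set.ncard_image_of_injective _ hinj]
  have : (S : Set (G × G)).ncard = Nat.card S := (Nat.card_coe_set_eq _).symm
  rw [this]
  have hd : Nat.card S ∣ Nat.card (N.prod N) := Subgroup.card_dvd_of_le hSle
  have : Nat.card (N.prod N) = Nat.card N * Nat.card N := by
    rw [Nat.card_congr (Subgroup.prodEquiv N N).toEquiv, Nat.card_prod]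
  rwa [this] at hd

end aux

/-- Let `G` be a finite 2-generated group, `N` an abelian minimal normal
subgroup of `G`, with `|N| = p^a` (`p` prime, `a ≥ 1`). Let `c` be the number of
complements of `N` in `G`, and `g1, g2 ∈ G` with `⟨g1, g2⟩N = G`. Then
`|Φ_N(g1,g2)| = p^(2a) − c`; moreover `c < p^(2a)`, so `|Φ_N(g1,g2)| ≥ p^(2a) − p^(2a−1)`. -/
theorem stmt_2 {G : Type*} [Group G] [Finite G]
    (h2gen : ∃ a b : G, Subgroup.closure {a, b} = ⊤)
    (N : Subgroup G) [N.Normal]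
    (hNne : N ≠ ⊥)
    (hmin : ∀ M : Subgroup G, M.Normal → M ≤ N → M ≠ ⊥ → M = N)
    (hab : ∀ x ∈ N, ∀ y ∈ N, x * y = y * x)
    (p a : ℕ) (hp : p.Prime) (ha : 1 ≤ a) (hcard : Nat.card N = p ^ a)
    (c : ℕ) (hc : c = Nat.card {H : Subgroup G // H ⊓ N = ⊥ ∧ H ⊔ N = ⊤})
    (g1 g2 : G) (hgen : Subgroup.closure {g1, g2} ⊔ N = ⊤) :
    Nat.card {q : G × G | q.1 ∈ N ∧ q.2 ∈ N ∧
        Subgroup.closure {g1 * q.1, g2 * q.2} = ⊤} = p ^ (2 * a) - c ∧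
    c < p ^ (2 * a) ∧
    p ^ (2 * a) - p ^ (2 * a - 1) ≤
      Nat.card {q : G × G | q.1 ∈ N ∧ q.2 ∈ N ∧
        Subgroup.closure {g1 * q.1, g2 * q.2} = ⊤} := by
  classical
  have hpa : Nat.card N * Nat.card N = p ^ (2 * a) := by
    rw [hcard, ← pow_add, two_mul]
  have key : ∀ x1 x2 : G, Subgroup.closure {x1, x2} ⊔ N = ⊤ →
      Nat.card {q : G × G | q.1 ∈ N ∧ q.2 ∈ N ∧
        Subgroup.closure {x1 * q.1, x2 * q.2} = ⊤} + c = p ^ (2 * a) := by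
    intro x1 x2 hx
    have hsplit := card_split (N := N) x1 x2
    rw [card_NG hNne hmin hab x1 x2 hx, ← hc, hpa] at hsplit
    exact hsplit
  have h1 := key g1 g2 hgen
  obtain ⟨u, v, huv⟩ := h2gen
  have h2 := key u v (by rw [huv]; exact top_sup_eq N)
  have hne : ((1 : G), (1 : G)) ∈ {q : G × G | q.1 ∈ N ∧ q.2 ∈ N ∧
      Subgroup.closure {u * q.1, v * q.2} = ⊤} := ⟨one_mem N, one_mem N, by simpa using huv⟩
  have hpos : 0 < Nat.card {q : G × G | q.1 ∈ N ∧ q.2 ∈ N ∧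
      Subgroup.closure {u * q.1, v * q.2} = ⊤} := by
    rw [Nat.card_coe_set_eq]
    exact (Set.ncard_pos (Set.toFinite _)).mpr ⟨_, hne⟩
  have hclt : c < p ^ (2 * a) := by omega
  have hcle : c ≤ p ^ (2 * a - 1) := by
    by_cases hex : ∃ H : Subgroup G, H ⊓ N = ⊥ ∧ H ⊔ N = ⊤
    · obtain ⟨H₀, hi₀, hs₀⟩ := hex
      have hdvd := card_NG_dvd hNne hmin hab g1 g2 hgen hi₀ hs₀
      rw [card_NG hNne hmin hab g1 g2 hgen, ← hc, hpa] at hdvd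
      obtain ⟨i, hi2a, rfl⟩ := (Nat.dvd_prime_pow hp).mp hdvd
      have hilt : i < 2 * a := by
        rcases lt_or_eq_of_le hi2a with h | h
        · exact h
        · exfalso; rw [h] at hclt; exact lt_irrefl _ hclt
      exact Nat.pow_le_pow_right hp.one_le (by omega)
    · have hemp : IsEmpty {H : Subgroup G // H ⊓ N = ⊥ ∧ H ⊔ N = ⊤} :=
        ⟨fun H => hex ⟨H.1, H.2⟩⟩
      rw [hc, Nat.card_of_isEmpty]
      exact Nat.zero_le _
  have hple : p ^ (2 * a - 1) ≤ p ^ (2 * a) :=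
    Nat.pow_le_pow_right hp.one_le (by omega)
  exact ⟨by omega, hclt, by omega⟩
end

section
/- Let G be a finite 2-generated group, let N be an abelian minimal normal subgroup of G, and let g1, g2 be elements of G with ⟨g1, g2⟩N = G. Then 2·|Φ_N(g1,g2)| = 3·|N| if and only if |N| = 2, N has a complement in G, and the quotient G/N has no epimorphic image of order 2. -/
set_option linter.unusedSectionVars false

section Helpers

variable {G : Type*} [Group G] [Finite G]

lemma exists_mul_mem (N K : Subgroup G) [N.Normal] (hsup : K ⊔ N = ⊤) (g : G) :
    ∃ n, n ∈ N ∧ g * n ∈ K := by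
  have hg : g ∈ ((K ⊔ N : Subgroup G) : Set G) := by rw [hsup]; trivial
  rw [Subgroup.mul_normal] at hg
  obtain ⟨k, hk, n, hn, hkn⟩ := hg
  refine ⟨n⁻¹, N.inv_mem hn, ?_⟩
  rw [← hkn]
  simpa using hk

lemma mem_unique (N K : Subgroup G) (hinf : K ⊓ N = ⊥) {g n n' : G}
    (hn : n ∈ N) (hn' : n' ∈ N) (h : g * n ∈ K) (h' : g * n' ∈ K) : n = n' := by
  have hK : n⁻¹ * n' ∈ K := by
    have := K.mul_mem (K.inv_mem h) h'
    simpa [mul_assoc] using this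
  have : n⁻¹ * n' ∈ K ⊓ N := ⟨hK, N.mul_mem (N.inv_mem hn) hn'⟩
  rw [hinf, Subgroup.mem_bot] at this
  exact inv_mul_eq_one.mp this

lemma compl_card (N K : Subgroup G) [N.Normal] (hinf : K ⊓ N = ⊥) (hsup : K ⊔ N = ⊤) :
    Nat.card K = Nat.card (G ⧸ N) := by
  refine Nat.card_eq_of_bijective ((QuotientGroup.mk' N).comp K.subtype) ⟨?_, ?_⟩
  · intro a b hab
    have h1 : (a : G)⁻¹ * b ∈ N := (QuotientGroup.eq (s := N)).mp hab
    have h2 : (a : G)⁻¹ * b ∈ K := K.mul_mem (K.inv_mem a.2) b.2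
    have : (a : G)⁻¹ * (b : G) ∈ K ⊓ N := ⟨h2, h1⟩
    rw [hinf, Subgroup.mem_bot] at this
    exact Subtype.ext (inv_mul_eq_one.mp this)
  · intro q
    obtain ⟨g, rfl⟩ := QuotientGroup.mk'_surjective N q
    obtain ⟨n, hn, hgn⟩ := exists_mul_mem N K hsup g
    refine ⟨⟨g * n, hgn⟩, ?_⟩
    show ((g * n : G) : G ⧸ N) = (g : G ⧸ N)
    rw [QuotientGroup.eq]
    have : (g * n)⁻¹ * g = n⁻¹ * (g⁻¹ * g) := by group
    rw [this]
    simpa using N.inv_mem hn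

lemma subgroup_eq_of_le_card {K H : Subgroup G} (hle : K ≤ H)
    (hcard : Nat.card H ≤ Nat.card K) : K = H := by
  apply SetLike.coe_injective
  refine Set.eq_of_subset_of_ncard_le hle ?_ (Set.toFinite _)
  rwa [← Nat.card_coe_set_eq, ← Nat.card_coe_set_eq]

lemma compl_eq_of_le {N K H : Subgroup G} [N.Normal]
    (hK1 : K ⊓ N = ⊥) (hK2 : K ⊔ N = ⊤) (hH1 : H ⊓ N = ⊥) (hH2 : H ⊔ N = ⊤)
    (hle : K ≤ H) : K = H :=
  subgroup_eq_of_le_card hle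
    (le_of_eq ((compl_card N H hH1 hH2).trans (compl_card N K hK1 hK2).symm))

end Helpers

section BadPairs

variable {G : Type*} [Group G] [Finite G]

/-- A "bad" pair (generating a proper subgroup mod N) generates a complement of N. -/
lemma bad_is_compl (N : Subgroup G) [N.Normal]
    (hmin : ∀ M : Subgroup G, M.Normal → M ≤ N → M ≠ ⊥ → M = N)
    (hab : ∀ x ∈ N, ∀ y ∈ N, x * y = y * x)
    (g1 g2 : G) (hgen : Subgroup.closure {g1, g2} ⊔ N = ⊤)
    {n1 n2 : G} (h1 : n1 ∈ N) (h2 : n2 ∈ N)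
    (hne : Subgroup.closure {g1 * n1, g2 * n2} ≠ ⊤) :
    Subgroup.closure {g1 * n1, g2 * n2} ⊓ N = ⊥ ∧
      Subgroup.closure {g1 * n1, g2 * n2} ⊔ N = ⊤ := by
  set K := Subgroup.closure {g1 * n1, g2 * n2} with hK
  have hk1 : g1 * n1 ∈ K := Subgroup.subset_closure (by simp)
  have hk2 : g2 * n2 ∈ K := Subgroup.subset_closure (by simp)
  have hsup : K ⊔ N = ⊤ := by
    rw [eq_top_iff, ← hgen]
    refine sup_le ?_ le_sup_right
    rw [Subgroup.closure_le]
    rintro x (rfl | rfl)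
    · have : x = (x * n1) * n1⁻¹ := by group
      rw [this]
      exact Subgroup.mul_mem _ (Subgroup.mem_sup_left hk1)
        (Subgroup.mem_sup_right (N.inv_mem h1))
    · have : x = (x * n2) * n2⁻¹ := by group
      rw [this]
      exact Subgroup.mul_mem _ (Subgroup.mem_sup_left hk2)
        (Subgroup.mem_sup_right (N.inv_mem h2))
  refine ⟨?_, hsup⟩
  have hnorm : (K ⊓ N).Normal := by
    constructor
    intro d hd g
    have hg : g ∈ ((K ⊔ N : Subgroup G) : Set G) := by rw [hsup]; trivial
    rw [Subgroup.mul_normal] at hg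
    obtain ⟨k, hk, n, hn, hkn⟩ := hg
    have hcomm : n * d = d * n := hab n hn d hd.2
    have hconj : n * d * n⁻¹ = d := by rw [hcomm, mul_inv_cancel_right]
    have key : g * d * g⁻¹ = k * d * k⁻¹ := by
      rw [← hkn]
      calc k * n * d * (k * n)⁻¹ = k * (n * d * n⁻¹) * k⁻¹ := by group
        _ = k * d * k⁻¹ := by rw [hconj]
    rw [key]
    exact ⟨K.mul_mem (K.mul_mem hk hd.1) (K.inv_mem hk),
      (by infer_instance : N.Normal).conj_mem d hd.2 k⟩
  by_contra hbot
  have hKN : K ⊓ N = N := hmin (K ⊓ N) hnorm inf_le_right hbot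
  have hNK : N ≤ K := by rw [← hKN]; exact inf_le_left
  exact hne (by rw [← hsup, sup_eq_left.mpr hNK])


/-- Key multiplicativity: badness is closed under multiplication of translations. -/
lemma bad_mul (N : Subgroup G) [N.Normal] (hNne : N ≠ ⊥)
    (hmin : ∀ M : Subgroup G, M.Normal → M ≤ N → M ≠ ⊥ → M = N)
    (hab : ∀ x ∈ N, ∀ y ∈ N, x * y = y * x)
    (g1 g2 : G) (hgen : Subgroup.closure {g1, g2} ⊔ N = ⊤)
    {a1 a2 x1 x2 y1 y2 : G}
    (ha1 : a1 ∈ N) (ha2 : a2 ∈ N) (hx1 : x1 ∈ N) (hx2 : x2 ∈ N)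
    (hy1 : y1 ∈ N) (hy2 : y2 ∈ N)
    (hA : Subgroup.closure {g1 * a1, g2 * a2} ≠ ⊤)
    (hX : Subgroup.closure {g1 * (a1 * x1), g2 * (a2 * x2)} ≠ ⊤)
    (hY : Subgroup.closure {g1 * (a1 * y1), g2 * (a2 * y2)} ≠ ⊤) :
    Subgroup.closure {g1 * (a1 * (x1 * y1)), g2 * (a2 * (x2 * y2))} ≠ ⊤ := by
  obtain ⟨hA1, hA2⟩ := bad_is_compl N hmin hab g1 g2 hgen ha1 ha2 hA
  obtain ⟨hX1, hX2⟩ := bad_is_compl N hmin hab g1 g2 hgen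
    (N.mul_mem ha1 hx1) (N.mul_mem ha2 hx2) hX
  obtain ⟨hY1, hY2⟩ := bad_is_compl N hmin hab g1 g2 hgen
    (N.mul_mem ha1 hy1) (N.mul_mem ha2 hy2) hY
  set K0 := Subgroup.closure {g1 * a1, g2 * a2} with hK0def
  set K := Subgroup.closure {g1 * (a1 * x1), g2 * (a2 * x2)} with hKdef
  set L := Subgroup.closure {g1 * (a1 * y1), g2 * (a2 * y2)} with hLdef
  choose τK hτKmem hτKin using fun g => exists_mul_mem N K hX2 g
  choose τL hτLmem hτLin using fun g => exists_mul_mem N L hY2 g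
  have hτK1 : τK 1 = 1 :=
    mem_unique N K hX1 (hτKmem 1) N.one_mem (hτKin 1) (by simpa using K.one_mem)
  have hτL1 : τL 1 = 1 :=
    mem_unique N L hY1 (hτLmem 1) N.one_mem (hτLin 1) (by simpa using L.one_mem)
  have cocycle : ∀ (τ : G → G) (M : Subgroup G), (∀ g, τ g ∈ N) → (∀ g, g * τ g ∈ M) →
      M ⊓ N = ⊥ → ∀ k k', τ (k * k') = k'⁻¹ * τ k * k' * τ k' := by
    intro τ M hmem hin hinf k k'
    have hconjN : k'⁻¹ * τ k * k' ∈ N := by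
      have := (by infer_instance : N.Normal).conj_mem (τ k) (hmem k) k'⁻¹
      simpa using this
    have hnmem : k'⁻¹ * τ k * k' * τ k' ∈ N := N.mul_mem hconjN (hmem k')
    have hprod : (k * k') * (k'⁻¹ * τ k * k' * τ k') ∈ M := by
      have heq : (k * k') * (k'⁻¹ * τ k * k' * τ k') = (k * τ k) * (k' * τ k') := by group
      rw [heq]; exact M.mul_mem (hin k) (hin k')
    exact mem_unique N M hinf (hmem (k * k')) hnmem (hin (k * k')) hprod
  have cocK := cocycle τK K hτKmem hτKin hX1
  have cocL := cocycle τL L hτLmem hτLin hY1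
  have himage_mul : ∀ u v, u ∈ (fun k => k * τK k * τL k) '' (K0 : Set G) →
      v ∈ (fun k => k * τK k * τL k) '' (K0 : Set G) →
      u * v ∈ (fun k => k * τK k * τL k) '' (K0 : Set G) := by
    rintro _ _ ⟨k, hk, rfl⟩ ⟨k', hk', rfl⟩
    refine ⟨k * k', K0.mul_mem hk hk', ?_⟩
    show (k * k') * τK (k * k') * τL (k * k') = (k * τK k * τL k) * (k' * τK k' * τL k')
    rw [cocK, cocL]
    have hu : k' * τK k' * k'⁻¹ ∈ N :=
      (by infer_instance : N.Normal).conj_mem _ (hτKmem k') k'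
    have hcomm : (k' * τK k' * k'⁻¹) * τL k = τL k * (k' * τK k' * k'⁻¹) :=
      hab _ hu _ (hτLmem k)
    calc (k * k') * (k'⁻¹ * τK k * k' * τK k') * (k'⁻¹ * τL k * k' * τL k')
        = (k * τK k) * (((k' * τK k' * k'⁻¹) * τL k) * (k' * τL k')) := by group
      _ = (k * τK k) * ((τL k * (k' * τK k' * k'⁻¹)) * (k' * τL k')) := by rw [hcomm]
      _ = (k * τK k * τL k) * (k' * τK k' * τL k') := by group
  have hone : (1 : G) ∈ (fun k => k * τK k * τL k) '' (K0 : Set G) :=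
    ⟨1, K0.one_mem, by simp [hτK1, hτL1]⟩
  set M : Subgroup G :=
    { carrier := (fun k => k * τK k * τL k) '' (K0 : Set G)
      one_mem' := hone
      mul_mem' := fun {u v} hu hv => himage_mul u v hu hv
      inv_mem' := by
        intro x hx
        have hpow : ∀ n : ℕ, x ^ (n + 1) ∈ (fun k => k * τK k * τL k) '' (K0 : Set G) := by
          intro n
          induction n with
          | zero => simpa using hx
          | succ m ih => rw [pow_succ]; exact himage_mul _ _ ih hx
        have hcard : x ^ Nat.card G = 1 := pow_card_eq_one'
        have hpos : 0 < Nat.card G := Nat.card_pos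
        have hmul : x ^ (Nat.card G - 1) * x = 1 := by
          rw [← pow_succ, Nat.sub_add_cancel hpos, hcard]
        have hinv : x⁻¹ = x ^ (Nat.card G - 1) := inv_eq_of_mul_eq_one_left hmul
        rw [hinv]
        rcases Nat.eq_zero_or_pos (Nat.card G - 1) with h0 | hpos'
        · rw [h0, pow_zero]; exact hone
        · obtain ⟨m, hm⟩ := Nat.exists_eq_add_of_lt hpos'
          rw [hm] at *
          simpa using hpow m } with hMdef
  have hk1K0 : g1 * a1 ∈ K0 := Subgroup.subset_closure (by simp)
  have hk2K0 : g2 * a2 ∈ K0 := Subgroup.subset_closure (by simp)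
  have hτKk1 : τK (g1 * a1) = x1 := by
    refine mem_unique N K hX1 (hτKmem _) hx1 (hτKin _) ?_
    rw [mul_assoc]; exact Subgroup.subset_closure (by simp)
  have hτKk2 : τK (g2 * a2) = x2 := by
    refine mem_unique N K hX1 (hτKmem _) hx2 (hτKin _) ?_
    rw [mul_assoc]; exact Subgroup.subset_closure (by simp)
  have hτLk1 : τL (g1 * a1) = y1 := by
    refine mem_unique N L hY1 (hτLmem _) hy1 (hτLin _) ?_
    rw [mul_assoc]; exact Subgroup.subset_closure (by simp)
  have hτLk2 : τL (g2 * a2) = y2 := by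
    refine mem_unique N L hY1 (hτLmem _) hy2 (hτLin _) ?_
    rw [mul_assoc]; exact Subgroup.subset_closure (by simp)
  have hmem1 : g1 * (a1 * (x1 * y1)) ∈ M := by
    refine ⟨g1 * a1, hk1K0, ?_⟩
    show (g1 * a1) * τK (g1 * a1) * τL (g1 * a1) = _
    rw [hτKk1, hτLk1]; group
  have hmem2 : g2 * (a2 * (x2 * y2)) ∈ M := by
    refine ⟨g2 * a2, hk2K0, ?_⟩
    show (g2 * a2) * τK (g2 * a2) * τL (g2 * a2) = _
    rw [hτKk2, hτLk2]; group
  have hle : Subgroup.closure {g1 * (a1 * (x1 * y1)), g2 * (a2 * (x2 * y2))} ≤ M := by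
    rw [Subgroup.closure_le]
    rintro x (rfl | rfl)
    exacts [hmem1, hmem2]
  have hMne : M ≠ ⊤ := by
    intro hM
    obtain ⟨w, hwN, hw1⟩ := (Subgroup.bot_or_exists_ne_one N).resolve_left hNne
    have hwM : w ∈ M := by rw [hM]; trivial
    obtain ⟨k, hkK0, hkeq⟩ := hwM
    have hkN : k ∈ N := by
      have hk : k = w * (τL k)⁻¹ * (τK k)⁻¹ := by
        rw [← hkeq]; show k = k * τK k * τL k * (τL k)⁻¹ * (τK k)⁻¹; group
      rw [hk]
      exact N.mul_mem (N.mul_mem hwN (N.inv_mem (hτLmem k))) (N.inv_mem (hτKmem k))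
    have hk1 : k ∈ K0 ⊓ N := ⟨hkK0, hkN⟩
    rw [hA1, Subgroup.mem_bot] at hk1
    apply hw1
    rw [← hkeq, hk1]
    simp [hτK1, hτL1]
  intro htop
  exact hMne (top_le_iff.mp (htop ▸ hle))


end BadPairs

section Order2
variable {G : Type*} [Group G] [Finite G]

lemma w_spec (N : Subgroup G) [N.Normal] (hcard : Nat.card N = 2) :
    ∃ w : G, w ∈ N ∧ w ≠ 1 ∧ w * w = 1 ∧ (∀ z ∈ N, z ≠ 1 → z = w) ∧
      ∀ g : G, g * w = w * g := by
  obtain ⟨x, y, hxy, hU⟩ := Nat.card_eq_two_iff.mp hcard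
  have hmem : ∀ z : ↥N, z = x ∨ z = y := by
    intro z
    have : z ∈ ({x, y} : Set ↥N) := hU ▸ Set.mem_univ z
    simpa using this
  have h1 := hmem 1
  have uniq : ∀ z z' : ↥N, z ≠ 1 → z' ≠ 1 → z = z' := by
    intro z z' hz hz'
    rcases hmem z with rfl | rfl <;> rcases hmem z' with rfl | rfl <;>
      rcases h1 with h | h <;> simp_all
  have : Nontrivial ↥N := ⟨⟨x, y, hxy⟩⟩
  obtain ⟨w', hw'⟩ := exists_ne (1 : ↥N)
  have hw2 : w' * w' = 1 := by
    by_contra h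
    have heq := uniq (w' * w') w' h hw'
    have : w' = 1 := by
      have h2 : w' * w' = w' * 1 := by rw [mul_one]; exact heq
      exact mul_left_cancel h2
    exact hw' this
  refine ⟨(w' : G), w'.2, ?_, ?_, ?_, ?_⟩
  · intro h; exact hw' (Subtype.ext h)
  · exact_mod_cast congrArg Subtype.val hw2
  · intro z hz hz1
    have := uniq ⟨z, hz⟩ w' (fun h => hz1 (congrArg Subtype.val h)) hw'
    exact congrArg Subtype.val this
  · intro g
    have hconj : g * (w' : G) * g⁻¹ ∈ N := (by infer_instance : N.Normal).conj_mem _ w'.2 g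
    have hne : g * (w' : G) * g⁻¹ ≠ 1 := by
      intro h
      have : (w' : G) = 1 := by
        have := congrArg (fun t => g⁻¹ * t * g) h
        simpa [mul_assoc] using this
      exact hw' (Subtype.ext this)
    have heq : g * (w' : G) * g⁻¹ = (w' : G) := by
      have := uniq ⟨_, hconj⟩ w' (fun h => hne (congrArg Subtype.val h)) hw'
      exact congrArg Subtype.val this
    calc g * (w' : G) = g * (w' : G) * g⁻¹ * g := by group
      _ = (w' : G) * g := by rw [heq]

/-- From two distinct complements of a normal subgroup of order 2, we get an
epimorphism onto `ZMod 2`. -/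
lemma epi_of_two_compl (N : Subgroup G) [N.Normal] (hcard : Nat.card N = 2)
    {K K' : Subgroup G}
    (hK1 : K ⊓ N = ⊥) (hK2 : K ⊔ N = ⊤) (hK'1 : K' ⊓ N = ⊥) (hK'2 : K' ⊔ N = ⊤)
    (hne : K ≠ K') :
    ∃ f : G ⧸ N →* Multiplicative (ZMod 2), Function.Surjective f := by
  classical
  obtain ⟨w, hwN, hw1, hw2, hwuniq, hwc⟩ := w_spec N hcard
  choose τ hτmem hτin using fun g => exists_mul_mem N K hK2 g
  choose τ' hτ'mem hτ'in using fun g => exists_mul_mem N K' hK'2 g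
  have central : ∀ n ∈ N, ∀ g : G, g * n = n * g := by
    intro n hn g
    by_cases h : n = 1
    · simp [h]
    · rw [hwuniq n hn h]; exact hwc g
  have τhom : ∀ (σ : G → G) (M : Subgroup G), (∀ g, σ g ∈ N) → (∀ g, g * σ g ∈ M) →
      M ⊓ N = ⊥ → ∀ a b, σ (a * b) = σ a * σ b := by
    intro σ M hmem hin hinf a b
    have hN : σ a * σ b ∈ N := N.mul_mem (hmem a) (hmem b)
    have hprod : (a * b) * (σ a * σ b) ∈ M := by
      have hc : b * σ a = σ a * b := central (σ a) (hmem a) b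
      have h1 : (a * b) * (σ a * σ b) = (a * (b * σ a)) * σ b := by group
      rw [h1, hc]
      have h2 : (a * (σ a * b)) * σ b = (a * σ a) * (b * σ b) := by group
      rw [h2]
      exact M.mul_mem (hin a) (hin b)
    exact mem_unique N M hinf (hmem (a * b)) hN (hin (a * b)) hprod
  have τKhom := τhom τ K hτmem hτin hK1
  have τ'hom := τhom τ' K' hτ'mem hτ'in hK'1
  have hdiff : ∀ (σ σ' : G → G), (∀ g, σ g ∈ N) → (∀ g, σ' g ∈ N) →
      ∀ g, σ g ≠ σ' g → σ' g = σ g * w := by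
    intro σ σ' hm hm' g h
    have hmemN : (σ g)⁻¹ * σ' g ∈ N := N.mul_mem (N.inv_mem (hm g)) (hm' g)
    have hne1 : (σ g)⁻¹ * σ' g ≠ 1 := fun hh => h (inv_mul_eq_one.mp hh)
    have := hwuniq _ hmemN hne1
    calc σ' g = σ g * ((σ g)⁻¹ * σ' g) := by group
      _ = σ g * w := by rw [this]
  set χ : G → ZMod 2 := fun g => if τ g = τ' g then 0 else 1 with hχdef
  have hχhom : ∀ a b, χ (a * b) = χ a + χ b := by
    intro a b
    by_cases ha : τ a = τ' a <;> by_cases hb : τ b = τ' b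
    · have heq : τ (a * b) = τ' (a * b) := by rw [τKhom, τ'hom, ha, hb]
      simp [hχdef, ha, hb, heq]
    · have hb' := hdiff τ τ' hτmem hτ'mem b hb
      have heq : τ' (a * b) = τ (a * b) * w := by
        rw [τ'hom, τKhom, ← ha, hb']; group
      have hne2 : τ (a * b) ≠ τ' (a * b) := by
        rw [heq]
        intro hh
        nth_rewrite 1 [← mul_one (τ (a*b))] at hh
        exact hw1 (mul_left_cancel hh).symm
      simp [hχdef, ha, hb, hne2]
    · have ha' := hdiff τ τ' hτmem hτ'mem a ha
      have hcw : τ b * w = w * τ b := central w hwN (τ b)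
      have heq : τ' (a * b) = τ (a * b) * w := by
        rw [τ'hom, τKhom, ← hb, ha', mul_assoc, ← hcw]; group
      have hne2 : τ (a * b) ≠ τ' (a * b) := by
        rw [heq]
        intro hh
        nth_rewrite 1 [← mul_one (τ (a*b))] at hh
        exact hw1 (mul_left_cancel hh).symm
      simp [hχdef, ha, hb, hne2]
    · have ha' := hdiff τ τ' hτmem hτ'mem a ha
      have hb' := hdiff τ τ' hτmem hτ'mem b hb
      have hcw : τ b * w = w * τ b := central w hwN (τ b)
      have heq : τ' (a * b) = τ (a * b) := by
        rw [τ'hom, τKhom, ha', hb']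
        calc τ a * w * (τ b * w) = τ a * (w * τ b) * w := by group
          _ = τ a * (τ b * w) * w := by rw [hcw]
          _ = τ a * τ b * (w * w) := by group
          _ = τ a * τ b := by rw [hw2, mul_one]
      have : (1 : ZMod 2) + 1 = 0 := by decide
      simp [hχdef, ha, hb, heq.symm, this]
  set F : G →* Multiplicative (ZMod 2) :=
    MonoidHom.mk' (fun g => Multiplicative.ofAdd (χ g))
      (fun a b => by
        show Multiplicative.ofAdd (χ (a * b)) =
          Multiplicative.ofAdd (χ a) * Multiplicative.ofAdd (χ b)
        rw [hχhom]; rfl) with hFdef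
  have hker : ∀ n ∈ N, F n = 1 := by
    intro n hn
    have hτn : τ n = n⁻¹ := mem_unique N K hK1 (hτmem n) (N.inv_mem hn) (hτin n)
      (by simpa using K.one_mem)
    have hτ'n : τ' n = n⁻¹ := mem_unique N K' hK'1 (hτ'mem n) (N.inv_mem hn) (hτ'in n)
      (by simpa using K'.one_mem)
    show Multiplicative.ofAdd (χ n) = 1
    have : χ n = 0 := by simp [hχdef, hτn, hτ'n]
    rw [this]; rfl
  refine ⟨QuotientGroup.lift N F hker, ?_⟩
  have hx : ∃ g : G, χ g = 1 := by
    have hnot : ¬ (∀ x, x ∈ K ↔ x ∈ K') := fun h => hne (Subgroup.ext h)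
    push_neg at hnot
    obtain ⟨x, hx⟩ := hnot
    rcases hx with ⟨hxK, hxK'⟩ | ⟨hxK, hxK'⟩
    · have hτx : τ x = 1 := mem_unique N K hK1 (hτmem x) N.one_mem (hτin x)
        (by simpa using hxK)
      have hτ'x : τ' x ≠ 1 := by
        intro h; apply hxK'; have := hτ'in x; rwa [h, mul_one] at this
      refine ⟨x, ?_⟩
      have hne3 : τ x ≠ τ' x := by rw [hτx]; exact fun h => hτ'x h.symm
      simp [hχdef, hne3]
    · have hτ'x : τ' x = 1 := mem_unique N K' hK'1 (hτ'mem x) N.one_mem (hτ'in x)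
        (by simpa using hxK')
      have hτx : τ x ≠ 1 := by
        intro h; apply hxK; have := hτin x; rwa [h, mul_one] at this
      refine ⟨x, ?_⟩
      have hne3 : τ x ≠ τ' x := by rw [hτ'x]; exact hτx
      simp [hχdef, hne3]
  intro t
  obtain ⟨g, hg⟩ := hx
  rcases (by decide : ∀ u : ZMod 2, u = 0 ∨ u = 1) (Multiplicative.toAdd t) with ht | ht
  · refine ⟨(1 : G ⧸ N), ?_⟩
    have htt : t = Multiplicative.ofAdd (0 : ZMod 2) := by rw [← ht]; rfl
    rw [htt, map_one]; rfl
  · refine ⟨((g : G) : G ⧸ N), ?_⟩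
    have htt : t = Multiplicative.ofAdd (1 : ZMod 2) := by rw [← ht]; rfl
    rw [htt]
    show QuotientGroup.lift N F hker ((g : G) : G ⧸ N) = _
    show Multiplicative.ofAdd (χ g) = _
    rw [hg]

end Order2

section Second
variable {G : Type*} [Group G] [Finite G]

/-- From an epimorphism onto `ZMod 2` and a complement, get a second complement. -/
lemma second_compl (N : Subgroup G) [N.Normal] (hcard : Nat.card N = 2)
    {H : Subgroup G} (hH1 : H ⊓ N = ⊥) (hH2 : H ⊔ N = ⊤)
    {f : G ⧸ N →* Multiplicative (ZMod 2)} (hf : Function.Surjective f) :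
    ∃ H' : Subgroup G, H' ⊓ N = ⊥ ∧ H' ⊔ N = ⊤ ∧ H' ≠ H := by
  obtain ⟨w, hwN, hw1, hw2, hwuniq, hwc⟩ := w_spec N hcard
  set F : G →* Multiplicative (ZMod 2) := f.comp (QuotientGroup.mk' N) with hFdef
  set v : G → ℕ := fun g => (Multiplicative.toAdd (F g)).val with hvdef
  have hworder : orderOf w = 2 := by
    haveI : Fact (Nat.Prime 2) := ⟨Nat.prime_two⟩
    refine orderOf_eq_prime ?_ hw1
    rw [pow_two]; exact hw2
  have hwpow : ∀ m n : ℕ, m % 2 = n % 2 → w ^ m = w ^ n := by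
    intro m n h
    rw [← pow_mod_orderOf w m, ← pow_mod_orderOf w n, hworder, h]
  have hwinv : w⁻¹ = w := inv_eq_of_mul_eq_one_right hw2
  have hcw : ∀ (g : G) (n : ℕ), g * w ^ n = w ^ n * g := by
    intro g n
    exact (Commute.pow_right (show Commute g w from hwc g) n)
  have hFN : ∀ n ∈ N, F n = 1 := by
    intro n hn
    show f (QuotientGroup.mk' N n) = 1
    rw [QuotientGroup.mk'_apply, (QuotientGroup.eq_one_iff n).mpr hn, map_one]
  have hvN : ∀ n ∈ N, v n = 0 := by
    intro n hn
    show (Multiplicative.toAdd (F n)).val = 0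
    rw [hFN n hn]
    rfl
  have hvmul : ∀ a b : G, v (a * b) % 2 = (v a + v b) % 2 := by
    intro a b
    show (Multiplicative.toAdd (F (a * b))).val % 2 = _
    rw [map_mul]
    show (Multiplicative.toAdd (F a) + Multiplicative.toAdd (F b)).val % 2 = _
    rw [ZMod.val_add]
    simp only [hvdef]
    omega
  set H' : Subgroup G :=
    { carrier := {g : G | g * w ^ (v g) ∈ H}
      one_mem' := by
        have h0 : v 1 = 0 := hvN 1 N.one_mem
        show (1 : G) * w ^ (v 1) ∈ H
        rw [h0, pow_zero, mul_one]; exact H.one_mem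
      mul_mem' := by
        intro a b ha hb
        have key : (a * b) * w ^ (v (a * b)) = (a * w ^ (v a)) * (b * w ^ (v b)) := by
          have hc : w ^ (v a) * b = b * w ^ (v a) := (hcw b (v a)).symm
          have h1 : (a * w ^ (v a)) * (b * w ^ (v b)) = (a * b) * (w ^ (v a) * w ^ (v b)) := by
            calc (a * w ^ (v a)) * (b * w ^ (v b)) = a * (w ^ (v a) * b) * w ^ (v b) := by group
              _ = a * (b * w ^ (v a)) * w ^ (v b) := by rw [hc]
              _ = (a * b) * (w ^ (v a) * w ^ (v b)) := by group
          rw [h1, ← pow_add]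
          congr 1
          exact hwpow _ _ (hvmul a b)
        show (a * b) * w ^ (v (a * b)) ∈ H
        rw [key]
        exact H.mul_mem ha hb
      inv_mem' := by
        intro a ha
        have hva : v a⁻¹ = v a := by
          show (Multiplicative.toAdd (F a⁻¹)).val = _
          rw [map_inv]
          have : ∀ u : Multiplicative (ZMod 2), Multiplicative.toAdd u⁻¹ =
              Multiplicative.toAdd u := by decide
          rw [this]
        show a⁻¹ * w ^ (v a⁻¹) ∈ H
        have hinv := H.inv_mem ha
        have heq : (a * w ^ (v a))⁻¹ = a⁻¹ * w ^ (v a) := by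
          rw [mul_inv_rev, ← inv_pow, hwinv, ← hcw]
        rw [hva]
        rwa [heq] at hinv }
    with hH'def
  refine ⟨H', ?_, ?_, ?_⟩
  · rw [eq_bot_iff]
    rintro x ⟨hx1, hx2⟩
    have hv0 : v x = 0 := hvN x hx2
    have : x ∈ H := by
      have := hx1
      show x ∈ H
      have hxx : x * w ^ (v x) ∈ H := this
      rwa [hv0, pow_zero, mul_one] at hxx
    have : x ∈ H ⊓ N := ⟨this, hx2⟩
    rwa [hH1] at this
  · rw [eq_top_iff, ← hH2]
    refine sup_le ?_ le_sup_right
    intro h hh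
    have hg' : h * w ^ (v h) ∈ H' := by
      show (h * w ^ (v h)) * w ^ (v (h * w ^ (v h))) ∈ H
      have hvw : v (w ^ (v h)) = 0 := hvN _ (N.pow_mem hwN _)
      have hveq : v (h * w ^ (v h)) % 2 = v h % 2 := by
        rw [hvmul, hvw]; simp
      have : w ^ (v (h * w ^ (v h))) = w ^ (v h) := hwpow _ _ hveq
      rw [this, mul_assoc, ← pow_add]
      have : w ^ (v h + v h) = 1 := by
        have : (v h + v h) % 2 = 0 % 2 := by omega
        rw [hwpow _ _ this, pow_zero]
      rw [this, mul_one]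
      exact hh
    have hh' : (h * w ^ (v h)) * w ^ (v h) = h := by
      rw [mul_assoc, ← pow_add]
      have hz : w ^ (v h + v h) = 1 := by
        have : (v h + v h) % 2 = 0 % 2 := by omega
        rw [hwpow _ _ this, pow_zero]
      rw [hz, mul_one]
    rw [← hh']
    exact Subgroup.mul_mem _ (Subgroup.mem_sup_left hg')
      (Subgroup.mem_sup_right (N.pow_mem hwN _))
  · obtain ⟨q, hq⟩ := hf (Multiplicative.ofAdd 1)
    obtain ⟨g, rfl⟩ := QuotientGroup.mk'_surjective N q
    have hFg : F g = Multiplicative.ofAdd 1 := hq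
    have hgmem : g ∈ ((H ⊔ N : Subgroup G) : Set G) := by rw [hH2]; trivial
    rw [Subgroup.mul_normal] at hgmem
    obtain ⟨k, hk, n, hn, hkn⟩ := hgmem
    have hFk : F k = Multiplicative.ofAdd 1 := by
      have hFgkn : F g = F k * F n := by rw [← hkn, map_mul]
      rw [hFN n hn, mul_one] at hFgkn
      rw [← hFgkn, hFg]
    have hvk : v k = 1 := by
      show (Multiplicative.toAdd (F k)).val = 1
      rw [hFk]
      rfl
    intro hH'H
    have hkH' : k ∈ H' := by rw [hH'H]; exact hk
    have hkw : k * w ^ (v k) ∈ H := hkH'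
    rw [hvk, pow_one] at hkw
    have hwH : w ∈ H := by
      have := H.mul_mem (H.inv_mem hk) hkw
      simpa [mul_assoc] using this
    have hwbot : w ∈ H ⊓ N := ⟨hwH, hwN⟩
    rw [hH1, Subgroup.mem_bot] at hwbot
    exact hw1 hwbot

end Second

section PGroup
variable {G : Type*} [Group G] [Finite G]

/-- A minimal normal abelian subgroup has prime exponent. -/
lemma exponent_prime (N : Subgroup G) [N.Normal] (hNne : N ≠ ⊥)
    (hmin : ∀ M : Subgroup G, M.Normal → M ≤ N → M ≠ ⊥ → M = N)
    (hab : ∀ x ∈ N, ∀ y ∈ N, x * y = y * x) :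
    ∃ p : ℕ, p.Prime ∧ ∀ x ∈ N, x ^ p = 1 := by
  have h2 : 1 < Nat.card N := (Subgroup.one_lt_card_iff_ne_bot N).mpr hNne
  set p := (Nat.card N).minFac with hpdef
  have hp : p.Prime := Nat.minFac_prime (by omega)
  haveI : Fact p.Prime := ⟨hp⟩
  obtain ⟨x, hx⟩ := exists_prime_orderOf_dvd_card' (G := ↥N) p (Nat.minFac_dvd _)
  refine ⟨p, hp, ?_⟩
  set P : Subgroup G :=
    { carrier := {z : G | z ∈ N ∧ z ^ p = 1}
      one_mem' := ⟨N.one_mem, one_pow p⟩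
      mul_mem' := by
        rintro a b ⟨haN, hap⟩ ⟨hbN, hbp⟩
        refine ⟨N.mul_mem haN hbN, ?_⟩
        have hc : Commute a b := hab a haN b hbN
        rw [hc.mul_pow, hap, hbp, mul_one]
      inv_mem' := by
        rintro a ⟨haN, hap⟩
        exact ⟨N.inv_mem haN, by rw [inv_pow, hap, inv_one]⟩ }
    with hPdef
  haveI hPnorm : P.Normal := by
    constructor
    rintro a ⟨haN, hap⟩ g
    refine ⟨(by infer_instance : N.Normal).conj_mem a haN g, ?_⟩
    rw [conj_pow, hap, mul_one, mul_inv_cancel]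
  have hPle : P ≤ N := fun z hz => hz.1
  have hPne : P ≠ ⊥ := by
    intro hbot
    have hxP : (x : G) ∈ P := by
      refine ⟨x.2, ?_⟩
      have : x ^ p = 1 := by rw [← hx]; exact pow_orderOf_eq_one x
      exact_mod_cast congrArg Subtype.val this
    rw [hbot, Subgroup.mem_bot] at hxP
    have : x = 1 := Subtype.ext hxP
    rw [this, orderOf_one] at hx
    exact hp.one_lt.ne hx
  have hPN := hmin P hPnorm hPle hPne
  intro z hz
  rw [← hPN] at hz
  exact hz.2

lemma arith_aux {p d k : ℕ} (hp : p.Prime) (hn2 : 2 ≤ p ^ d)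
    (h : 2 * (p ^ d * p ^ d) = 3 * p ^ d + 2 * p ^ k) : p ^ d = 2 ∧ p ^ k = 1 := by
  have hd0 : d ≠ 0 := by
    intro h0
    rw [h0, pow_zero] at hn2
    omega
  have hp2 : p = 2 := by
    have hpar : 2 ∣ p ^ d := by
      obtain ⟨M, hM⟩ : ∃ M, p ^ d * p ^ d = M := ⟨_, rfl⟩
      obtain ⟨C, hC⟩ : ∃ C, p ^ k = C := ⟨_, rfl⟩
      rw [hM, hC] at h
      omega
    have := (Nat.prime_dvd_prime_iff_eq Nat.prime_two hp).mp
      (Nat.Prime.dvd_of_dvd_pow Nat.prime_two hpar)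
    omega
  subst hp2
  have hMdvd : 2 ^ d ∣ 2 ^ d * 2 ^ d := dvd_mul_left _ _
  have hsub : 2 * 2 ^ k = 2 * (2 ^ d * 2 ^ d) - 3 * 2 ^ d := by
    obtain ⟨M, hM⟩ : ∃ M, 2 ^ d * 2 ^ d = M := ⟨_, rfl⟩
    obtain ⟨C, hC⟩ : ∃ C, 2 ^ k = C := ⟨_, rfl⟩
    rw [hM, hC] at h ⊢
    omega
  have hdvd2C : 2 ^ d ∣ 2 * 2 ^ k := by
    rw [hsub]
    exact Nat.dvd_sub (Dvd.dvd.mul_left hMdvd 2) (Dvd.dvd.mul_left dvd_rfl 3)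
  have hdvd2C' : 2 ^ d ∣ 2 ^ (k + 1) := by
    rwa [pow_succ, mul_comm]
  have hdk : d ≤ k + 1 := (Nat.pow_dvd_pow_iff_le_right (by omega : 1 < 2)).mp hdvd2C'
  set e := k + 1 - d with hedef
  have hk1 : k + 1 = d + e := by omega
  have key2 : 2 ^ d * 2 ^ (d + 1) = 2 ^ d * (3 + 2 ^ e) := by
    have h1 : 2 ^ d * 2 ^ (d + 1) = 2 * (2 ^ d * 2 ^ d) := by ring
    have h2 : 2 ^ d * (3 + 2 ^ e) = 3 * 2 ^ d + 2 * 2 ^ k := by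
      calc 2 ^ d * (3 + 2 ^ e) = 3 * 2 ^ d + 2 ^ (d + e) := by ring
        _ = 3 * 2 ^ d + 2 * 2 ^ k := by rw [← hk1, pow_succ, mul_comm (2 ^ k) 2]
    rw [h1, h2, h]
  have key3 : 2 ^ (d + 1) = 3 + 2 ^ e := Nat.eq_of_mul_eq_mul_left (by positivity) key2
  have he : e = 0 := by
    by_contra he
    have h2e : 2 ∣ 2 ^ e := dvd_pow_self 2 he
    have h2d : 2 ∣ 2 ^ (d + 1) := dvd_pow_self 2 (Nat.succ_ne_zero d)
    obtain ⟨E, hE⟩ : ∃ E, 2 ^ e = E := ⟨_, rfl⟩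
    obtain ⟨D, hD⟩ : ∃ D, 2 ^ (d + 1) = D := ⟨_, rfl⟩
    rw [hE] at key3 h2e
    rw [hD] at key3 h2d
    omega
  have hd1 : d = 1 := by
    have : 2 ^ (d + 1) = 2 ^ 2 := by rw [key3, he]; norm_num
    have := Nat.pow_right_injective (le_refl 2) this
    omega
  have hk0 : k = 0 := by omega
  rw [hd1, hk0]
  exact ⟨rfl, rfl⟩

end PGroup

/-- Let `G` be a finite 2-generated group, `N` an abelian minimal normal
subgroup of `G`, and `g1, g2 ∈ G` with `⟨g1, g2⟩N = G`. Then `2·|Φ_N(g1,g2)| = 3·|N|` iff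
`|N| = 2`, `N` has a complement in `G`, and `G/N` has no epimorphic image of order 2. -/
theorem stmt_4 {G : Type*} [Group G] [Finite G]
    (h2gen : ∃ a b : G, Subgroup.closure {a, b} = ⊤)
    (N : Subgroup G) [N.Normal]
    (hNne : N ≠ ⊥)
    (hmin : ∀ M : Subgroup G, M.Normal → M ≤ N → M ≠ ⊥ → M = N)
    (hab : ∀ x ∈ N, ∀ y ∈ N, x * y = y * x)
    (g1 g2 : G) (hgen : Subgroup.closure {g1, g2} ⊔ N = ⊤) :
    2 * Nat.card {q : G × G | q.1 ∈ N ∧ q.2 ∈ N ∧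
        Subgroup.closure {g1 * q.1, g2 * q.2} = ⊤} = 3 * Nat.card N ↔
      (Nat.card N = 2 ∧ (∃ H : Subgroup G, H ⊓ N = ⊥ ∧ H ⊔ N = ⊤) ∧
        ¬ ∃ f : G ⧸ N →* Multiplicative (ZMod 2), Function.Surjective f) := by
  classical
  set Φs : Set (G × G) := {q : G × G | q.1 ∈ N ∧ q.2 ∈ N ∧
      Subgroup.closure {g1 * q.1, g2 * q.2} = ⊤} with hΦdef
  set Bs : Set (G × G) := {q : G × G | q.1 ∈ N ∧ q.2 ∈ N ∧
      Subgroup.closure {g1 * q.1, g2 * q.2} ≠ ⊤} with hBdef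
  have hdisj : Disjoint Φs Bs := by
    rw [Set.disjoint_left]
    rintro q ⟨_, _, hq⟩ ⟨_, _, hq'⟩
    exact hq' hq
  have hunion : Φs ∪ Bs = (N : Set G) ×ˢ (N : Set G) := by
    ext q
    constructor
    · rintro (⟨h1, h2, _⟩ | ⟨h1, h2, _⟩) <;> exact ⟨h1, h2⟩
    · rintro ⟨h1, h2⟩
      by_cases h : Subgroup.closure {g1 * q.1, g2 * q.2} = ⊤
      · exact Or.inl ⟨h1, h2, h⟩
      · exact Or.inr ⟨h1, h2, h⟩
  have hsplit : Nat.card Φs + Nat.card Bs = Nat.card N * Nat.card N := by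
    rw [Nat.card_coe_set_eq, Nat.card_coe_set_eq,
      ← Set.ncard_union_eq hdisj (Set.toFinite _) (Set.toFinite _), hunion,
      ← Nat.card_coe_set_eq, Nat.card_congr (Equiv.Set.prod _ _), Nat.card_prod]
    rfl
  constructor
  · -- forward direction
    intro heq
    have hn2 : 1 < Nat.card N := (Subgroup.one_lt_card_iff_ne_bot N).mpr hNne
    have hkey : 2 * (Nat.card N * Nat.card N) = 3 * Nat.card N + 2 * Nat.card Bs := by
      obtain ⟨nn, hnn⟩ : ∃ nn, Nat.card N * Nat.card N = nn := ⟨_, rfl⟩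
      rw [hnn] at hsplit ⊢
      omega
    have hBpos : 0 < Nat.card Bs := by
      rcases Nat.eq_zero_or_pos (Nat.card Bs) with h0 | h
      · exfalso
        rw [h0, mul_zero, add_zero] at hkey
        have h1 : Nat.card N * (2 * Nat.card N) = Nat.card N * 3 := by
          calc Nat.card N * (2 * Nat.card N) = 2 * (Nat.card N * Nat.card N) := by ring
            _ = 3 * Nat.card N := hkey
            _ = Nat.card N * 3 := by ring
        have := Nat.eq_of_mul_eq_mul_left (by omega) h1
        omega
      · exact h
    obtain ⟨⟨⟨a1, a2⟩, haB⟩⟩ := (Nat.card_pos_iff.mp hBpos).1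
    have haB' := haB
    obtain ⟨ha1, ha2, hbad⟩ := haB'
    set Smon : Submonoid (G × G) :=
      { carrier := {q : G × G | q.1 ∈ N ∧ q.2 ∈ N ∧
          Subgroup.closure {g1 * (a1 * q.1), g2 * (a2 * q.2)} ≠ ⊤}
        one_mem' := ⟨N.one_mem, N.one_mem, by simpa using hbad⟩
        mul_mem' := by
          rintro q r ⟨hq1, hq2, hqb⟩ ⟨hr1, hr2, hrb⟩
          exact ⟨N.mul_mem hq1 hr1, N.mul_mem hq2 hr2,
            bad_mul N hNne hmin hab g1 g2 hgen ha1 ha2 hq1 hq2 hr1 hr2 hbad hqb hrb⟩ }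
      with hSmondef
    set S : Subgroup (G × G) :=
      { Smon with
        inv_mem' := by
          intro x hx
          have hpow : ∀ n : ℕ, x ^ (n + 1) ∈ Smon := by
            intro n
            induction n with
            | zero => simpa using hx
            | succ m ih => rw [pow_succ]; exact Smon.mul_mem ih hx
          have hcard : x ^ Nat.card (G × G) = 1 := pow_card_eq_one'
          have hpos : 0 < Nat.card (G × G) := Nat.card_pos
          have hmul : x ^ (Nat.card (G × G) - 1) * x = 1 := by
            rw [← pow_succ, Nat.sub_add_cancel hpos, hcard]
          have hinv : x⁻¹ = x ^ (Nat.card (G × G) - 1) := inv_eq_of_mul_eq_one_left hmul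
          rw [hinv]
          rcases Nat.eq_zero_or_pos (Nat.card (G × G) - 1) with h0 | hpos'
          · rw [h0, pow_zero]; exact Smon.one_mem
          · obtain ⟨m, hm⟩ := Nat.exists_eq_add_of_lt hpos'
            rw [hm]
            simpa using hpow m }
      with hSdef
    have hforward : ∀ q : G × G, q ∈ Bs → (a1⁻¹ * q.1, a2⁻¹ * q.2) ∈ S := by
      rintro ⟨q1, q2⟩ ⟨hq1, hq2, hqb⟩
      refine ⟨N.mul_mem (N.inv_mem ha1) hq1, N.mul_mem (N.inv_mem ha2) hq2, ?_⟩
      show Subgroup.closure {g1 * (a1 * (a1⁻¹ * q1)), g2 * (a2 * (a2⁻¹ * q2))} ≠ ⊤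
      rw [mul_inv_cancel_left, mul_inv_cancel_left]
      exact hqb
    have hback : ∀ p : G × G, p ∈ S → (a1 * p.1, a2 * p.2) ∈ Bs := by
      rintro ⟨p1, p2⟩ ⟨hp1, hp2, hpb⟩
      exact ⟨N.mul_mem ha1 hp1, N.mul_mem ha2 hp2, hpb⟩
    have hcardBS : Nat.card Bs = Nat.card S := by
      refine Nat.card_congr
        { toFun := fun q => ⟨(a1⁻¹ * q.1.1, a2⁻¹ * q.1.2), hforward q.1 q.2⟩
          invFun := fun p => ⟨(a1 * p.1.1, a2 * p.1.2), hback p.1 p.2⟩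
          left_inv := fun q => Subtype.ext (by simp)
          right_inv := fun p => Subtype.ext (by simp) }
    obtain ⟨p, hp, hexp⟩ := exponent_prime N hNne hmin hab
    haveI : Fact p.Prime := ⟨hp⟩
    have hNp : IsPGroup p ↥N := by
      intro x
      refine ⟨1, ?_⟩
      rw [pow_one]
      apply Subtype.ext
      push_cast
      exact hexp (x : G) x.2
    obtain ⟨d, hd⟩ := IsPGroup.exists_card_eq hNp
    have hSle : S ≤ N.prod N := by
      rintro ⟨q1, q2⟩ hq
      exact ⟨hq.1, hq.2.1⟩
    have hSdvd : Nat.card S ∣ Nat.card N * Nat.card N := by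
      have hdvd := Subgroup.card_dvd_of_le hSle
      rwa [Nat.card_congr (Subgroup.prodEquiv N N).toEquiv, Nat.card_prod] at hdvd
    rw [hd, ← pow_add] at hSdvd
    obtain ⟨k, hk, hck⟩ := (Nat.dvd_prime_pow hp).mp hSdvd
    rw [hd, hcardBS, hck] at hkey
    obtain ⟨hN2, hS1⟩ := arith_aux hp (by rw [← hd]; omega) hkey
    have hcardN2 : Nat.card N = 2 := by rw [hd]; exact hN2
    obtain ⟨hK0inf, hK0sup⟩ := bad_is_compl N hmin hab g1 g2 hgen ha1 ha2 hbad
    refine ⟨hcardN2, ⟨Subgroup.closure {g1 * a1, g2 * a2}, hK0inf, hK0sup⟩, ?_⟩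
    rintro ⟨f, hf⟩
    obtain ⟨H', hH'1, hH'2, hH'ne⟩ := second_compl N hcardN2 hK0inf hK0sup hf
    obtain ⟨u1, hu1N, hu1⟩ := exists_mul_mem N H' hH'2 g1
    obtain ⟨u2, hu2N, hu2⟩ := exists_mul_mem N H' hH'2 g2
    have hH'top : H' ≠ ⊤ := by
      intro h
      rw [h, top_inf_eq] at hH'1
      exact hNne hH'1
    have hubad : Subgroup.closure {g1 * u1, g2 * u2} ≠ ⊤ := by
      intro h
      apply hH'top
      rw [eq_top_iff, ← h, Subgroup.closure_le]
      rintro x (rfl | rfl)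
      exacts [hu1, hu2]
    have huB : ((u1, u2) : G × G) ∈ Bs := ⟨hu1N, hu2N, hubad⟩
    have hBs1 : Nat.card Bs = 1 := by rw [hcardBS, hck, hS1]
    have hsub : Subsingleton ↥Bs := (Nat.card_eq_one_iff_unique.mp hBs1).1
    have hEq : ((u1, u2) : G × G) = (a1, a2) :=
      congrArg Subtype.val (hsub.elim ⟨(u1, u2), huB⟩ ⟨(a1, a2), haB⟩)
    have hua1 : u1 = a1 := congrArg Prod.fst hEq
    have hua2 : u2 = a2 := congrArg Prod.snd hEq
    have hK0le : Subgroup.closure {g1 * a1, g2 * a2} ≤ H' := by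
      rw [Subgroup.closure_le]
      rintro x (rfl | rfl)
      · rw [← hua1]; exact hu1
      · rw [← hua2]; exact hu2
    exact hH'ne (compl_eq_of_le hK0inf hK0sup hH'1 hH'2 hK0le).symm
  · -- backward direction
    rintro ⟨hcard2, ⟨H, hH1, hH2⟩, hnoepi⟩
    obtain ⟨u1, hu1N, hu1⟩ := exists_mul_mem N H hH2 g1
    obtain ⟨u2, hu2N, hu2⟩ := exists_mul_mem N H hH2 g2
    have hHtop : H ≠ ⊤ := by
      intro h
      rw [h, top_inf_eq] at hH1
      exact hNne hH1
    have hubad : Subgroup.closure {g1 * u1, g2 * u2} ≠ ⊤ := by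
      intro h
      apply hHtop
      rw [eq_top_iff, ← h, Subgroup.closure_le]
      rintro x (rfl | rfl)
      exacts [hu1, hu2]
    have huB : ((u1, u2) : G × G) ∈ Bs := ⟨hu1N, hu2N, hubad⟩
    have hsub : ∀ q r : G × G, q ∈ Bs → r ∈ Bs → q = r := by
      rintro ⟨q1, q2⟩ ⟨r1, r2⟩ ⟨hq1, hq2, hqb⟩ ⟨hr1, hr2, hrb⟩
      obtain ⟨hQi, hQs⟩ := bad_is_compl N hmin hab g1 g2 hgen hq1 hq2 hqb
      obtain ⟨hRi, hRs⟩ := bad_is_compl N hmin hab g1 g2 hgen hr1 hr2 hrb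
      by_cases hKK : Subgroup.closure {g1 * q1, g2 * q2} =
          Subgroup.closure {g1 * r1, g2 * r2}
      · have h1 : q1 = r1 := mem_unique N _ hQi (g := g1) hq1 hr1
          (Subgroup.subset_closure (Set.mem_insert _ _))
          (by rw [hKK]; exact Subgroup.subset_closure (Set.mem_insert _ _))
        have h2 : q2 = r2 := mem_unique N _ hQi (g := g2) hq2 hr2
          (Subgroup.subset_closure (Set.mem_insert_of_mem _ rfl))
          (by rw [hKK]; exact Subgroup.subset_closure (Set.mem_insert_of_mem _ rfl))
        rw [h1, h2]
      · exact absurd (epi_of_two_compl N hcard2 hQi hQs hRi hRs hKK) hnoepi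
    have hBs1 : Nat.card Bs = 1 := by
      rw [Nat.card_eq_one_iff_unique]
      refine ⟨⟨?_⟩, ⟨⟨(u1, u2), huB⟩⟩⟩
      rintro ⟨q, hq⟩ ⟨r, hr⟩
      exact Subtype.ext (hsub q r hq hr)
    have hΦ3 : Nat.card Φs = 3 := by
      rw [hcard2] at hsplit
      omega
    rw [hΦ3, hcard2]
end

section
/- Let G be a finite 2-generated group, let N be an abelian minimal normal subgroup of G, and let g1, g2 be elements of G with ⟨g1, g2⟩N = G. If |N| > 2 or N has no complement in G, then |Φ_N(g1,g2)| ≥ 2·|N|. -/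
open Pointwise

section Aux

variable {G : Type*} [Group G]

lemma aux_mem_sup {H K : Subgroup G} [K.Normal] {g : G} (hg : g ∈ H ⊔ K) :
    ∃ h ∈ H, ∃ k ∈ K, g = h * k := by
  have : g ∈ ((H ⊔ K : Subgroup G) : Set G) := hg
  rw [Subgroup.mul_normal H K] at this
  obtain ⟨h, hh, k, hk, rfl⟩ := this
  exact ⟨h, hh, k, hk, rfl⟩

/-- property of being a "projection along `N`" : trivial on `N` and identity mod `N`. -/
def IsProjMod (N : Subgroup G) (f : G →* G) : Prop :=
  (∀ n ∈ N, f n = 1) ∧ ∀ g : G, g⁻¹ * f g ∈ N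

lemma exists_proj (N : Subgroup G) [N.Normal] (K : Subgroup G)
    (hKN : K ⊓ N = ⊥) (hKN2 : K ⊔ N = ⊤) :
    ∃ f : G →* G, IsProjMod N f ∧ (∀ k ∈ K, f k = k) ∧ ∀ g, f g ∈ K := by
  set e : K →* G ⧸ N := (QuotientGroup.mk' N).comp K.subtype with he
  have hinj : Function.Injective e := by
    rw [← MonoidHom.ker_eq_bot_iff, eq_bot_iff]
    intro x hx
    have hx1 : (x : G) ∈ N := by
      rw [MonoidHom.mem_ker] at hx
      exact (QuotientGroup.eq_one_iff _).1 hx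
    have hx2 : (x : G) ∈ K ⊓ N := ⟨x.2, hx1⟩
    rw [hKN, Subgroup.mem_bot] at hx2
    exact Subgroup.mem_bot.2 (Subtype.ext hx2)
  have hsurj : Function.Surjective e := by
    intro q
    obtain ⟨g, rfl⟩ := QuotientGroup.mk'_surjective N q
    have hg : g ∈ K ⊔ N := by rw [hKN2]; trivial
    obtain ⟨k, hk, n, hn, rfl⟩ := aux_mem_sup hg
    refine ⟨⟨k, hk⟩, ?_⟩
    have h1 : (QuotientGroup.mk' N) n = 1 := (QuotientGroup.eq_one_iff n).2 hn
    show (QuotientGroup.mk' N) k = (QuotientGroup.mk' N) (k * n)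
    rw [map_mul, h1, mul_one]
  set E := MulEquiv.ofBijective e ⟨hinj, hsurj⟩ with hE
  have hEapp : ∀ x : K, E x = QuotientGroup.mk' N x := fun x => rfl
  refine ⟨K.subtype.comp (E.symm.toMonoidHom.comp (QuotientGroup.mk' N)), ⟨?_, ?_⟩, ?_, ?_⟩
  · intro n hn
    have h1 : (QuotientGroup.mk' N) n = 1 := (QuotientGroup.eq_one_iff n).2 hn
    show ((E.symm ((QuotientGroup.mk' N) n) : K) : G) = 1
    rw [h1, map_one]
    rfl
  · intro g
    have key : (QuotientGroup.mk' N) ((E.symm ((QuotientGroup.mk' N) g) : K) : G)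
        = (QuotientGroup.mk' N) g := by
      rw [← hEapp, MulEquiv.apply_symm_apply]
    rw [← QuotientGroup.eq_one_iff]
    show (QuotientGroup.mk' N) (g⁻¹ * ((E.symm ((QuotientGroup.mk' N) g) : K) : G)) = 1
    rw [map_mul, map_inv, key, inv_mul_cancel]
  · intro k hk
    have key : E.symm (QuotientGroup.mk' N k) = ⟨k, hk⟩ := by
      rw [MulEquiv.symm_apply_eq, hEapp]
    show ((E.symm ((QuotientGroup.mk' N) k) : K) : G) = k
    rw [key]
  · intro g
    exact (E.symm ((QuotientGroup.mk' N) g)).2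

lemma range_inf {N : Subgroup G} {f : G →* G} (hf : IsProjMod N f) :
    f.range ⊓ N = ⊥ := by
  rw [eq_bot_iff]
  rintro x ⟨⟨g, rfl⟩, hxN⟩
  have hidem : f (f g) = f g := by
    have e : g * (g⁻¹ * f g) = f g := by group
    have : f (g * (g⁻¹ * f g)) = f g * f (g⁻¹ * f g) := map_mul f _ _
    rw [hf.1 _ (hf.2 g), mul_one, e] at this
    exact this
  have := hf.1 _ hxN
  rw [hidem] at this
  simp [this]

lemma proj_ext {N : Subgroup G} {f f' : G →* G} (hf : IsProjMod N f) (hf' : IsProjMod N f')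
    {s : Set G} (hs : Subgroup.closure s ⊔ N = ⊤) (hagree : ∀ x ∈ s, f x = f' x) :
    f = f' := by
  have h1 : Subgroup.closure s ≤ f.eqLocus f' :=
    (Subgroup.closure_le _).2 hagree
  have h2 : N ≤ f.eqLocus f' := by
    intro n hn
    show f n = f' n
    rw [hf.1 n hn, hf'.1 n hn]
  have htop : ⊤ ≤ f.eqLocus f' := hs ▸ sup_le h1 h2
  exact MonoidHom.ext fun x => htop (Subgroup.mem_top x)

lemma diff_mem {N : Subgroup G} {f π : G →* G} (hf : IsProjMod N f) (hπ : IsProjMod N π)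
    (g : G) : (π g)⁻¹ * f g ∈ N := by
  have e : (π g)⁻¹ * f g = (g⁻¹ * π g)⁻¹ * (g⁻¹ * f g) := by group
  rw [e]
  exact mul_mem (inv_mem (hπ.2 g)) (hf.2 g)

lemma star_hom (N : Subgroup G) [hN : N.Normal]
    (hab : ∀ x ∈ N, ∀ y ∈ N, x * y = y * x)
    (π f f' : G →* G) (hπ : IsProjMod N π) (hf : IsProjMod N f) (hf' : IsProjMod N f') :
    ∃ m : G →* G, IsProjMod N m ∧ ∀ g, m g = f g * (π g)⁻¹ * f' g := by
  refine ⟨{ toFun := fun g => f g * (π g)⁻¹ * f' g,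
            map_one' := by simp,
            map_mul' := ?_ }, ⟨?_, ?_⟩, fun g => rfl⟩
  · intro x y
    simp only [map_mul]
    have hv := diff_mem hf hπ y
    have hu' := diff_mem hf' hπ x
    have hbvb : π y * ((π y)⁻¹ * f y) * (π y)⁻¹ ∈ N :=
      hN.conj_mem _ hv (π y)
    have key : (π y * ((π y)⁻¹ * f y) * (π y)⁻¹) * ((π x)⁻¹ * f' x)
        = ((π x)⁻¹ * f' x) * (π y * ((π y)⁻¹ * f y) * (π y)⁻¹) := hab _ hbvb _ hu'
    calc f x * f y * (π x * π y)⁻¹ * (f' x * f' y)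
        = f x * ((π y * ((π y)⁻¹ * f y) * (π y)⁻¹) * ((π x)⁻¹ * f' x)) * f' y := by group
      _ = f x * (((π x)⁻¹ * f' x) * (π y * ((π y)⁻¹ * f y) * (π y)⁻¹)) * f' y := by rw [key]
      _ = f x * (π x)⁻¹ * f' x * (f y * (π y)⁻¹ * f' y) := by group
  · intro n hn
    simp [hf.1 n hn, hf'.1 n hn, hπ.1 n hn]
  · intro g
    show g⁻¹ * (f g * (π g)⁻¹ * f' g) ∈ N
    have e : g⁻¹ * (f g * (π g)⁻¹ * f' g)
        = (g⁻¹ * f g) * (g⁻¹ * π g)⁻¹ * (g⁻¹ * f' g) := by group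
    rw [e]
    exact mul_mem (mul_mem (hf.2 g) (inv_mem (hπ.2 g))) (hf'.2 g)

lemma inv_hom (N : Subgroup G) [hN : N.Normal]
    (hab : ∀ x ∈ N, ∀ y ∈ N, x * y = y * x)
    (π f : G →* G) (hπ : IsProjMod N π) (hf : IsProjMod N f) :
    ∃ m : G →* G, IsProjMod N m ∧ ∀ g, m g = π g * (f g)⁻¹ * π g := by
  refine ⟨{ toFun := fun g => π g * (f g)⁻¹ * π g,
            map_one' := by simp,
            map_mul' := ?_ }, ⟨?_, ?_⟩, fun g => rfl⟩
  · intro x y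
    simp only [map_mul]
    have hv := diff_mem hf hπ y
    have hu := diff_mem hf hπ x
    have hbvb : π y * ((π y)⁻¹ * f y)⁻¹ * (π y)⁻¹ ∈ N :=
      hN.conj_mem _ (inv_mem hv) (π y)
    have key : (π y * ((π y)⁻¹ * f y)⁻¹ * (π y)⁻¹) * ((π x)⁻¹ * f x)⁻¹
        = ((π x)⁻¹ * f x)⁻¹ * (π y * ((π y)⁻¹ * f y)⁻¹ * (π y)⁻¹) :=
      hab _ hbvb _ (inv_mem hu)
    calc π x * π y * (f x * f y)⁻¹ * (π x * π y)
        = π x * ((π y * ((π y)⁻¹ * f y)⁻¹ * (π y)⁻¹) * ((π x)⁻¹ * f x)⁻¹) * π y := by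
          group
      _ = π x * (((π x)⁻¹ * f x)⁻¹ * (π y * ((π y)⁻¹ * f y)⁻¹ * (π y)⁻¹)) * π y := by
          rw [key]
      _ = π x * (f x)⁻¹ * π x * (π y * (f y)⁻¹ * π y) := by group
  · intro n hn
    simp [hf.1 n hn, hπ.1 n hn]
  · intro g
    show g⁻¹ * (π g * (f g)⁻¹ * π g) ∈ N
    have e : g⁻¹ * (π g * (f g)⁻¹ * π g)
        = (g⁻¹ * π g) * ((π g)⁻¹ * f g)⁻¹ := by group
    rw [e]
    exact mul_mem (hπ.2 g) (inv_mem (diff_mem hf hπ g))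

lemma sup_aux {N : Subgroup G} {g1 g2 n1 n2 : G}
    (hgen : Subgroup.closure {g1, g2} ⊔ N = ⊤) (h1 : n1 ∈ N) (h2 : n2 ∈ N) :
    Subgroup.closure {g1 * n1, g2 * n2} ⊔ N = ⊤ := by
  apply top_unique
  rw [← hgen]
  refine sup_le ?_ le_sup_right
  refine (Subgroup.closure_le _).2 ?_
  intro x hx
  simp only [Set.mem_insert_iff, Set.mem_singleton_iff] at hx
  rcases hx with h | h
  all_goals rw [h]
  · show g1 ∈ Subgroup.closure {g1 * n1, g2 * n2} ⊔ N
    have e : g1 = (g1 * n1) * n1⁻¹ := by group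
    rw [e]
    exact mul_mem (Subgroup.mem_sup_left (Subgroup.subset_closure (by simp)))
      (Subgroup.mem_sup_right (inv_mem h1))
  · show g2 ∈ Subgroup.closure {g1 * n1, g2 * n2} ⊔ N
    have e : g2 = (g2 * n2) * n2⁻¹ := by group
    rw [e]
    exact mul_mem (Subgroup.mem_sup_left (Subgroup.subset_closure (by simp)))
      (Subgroup.mem_sup_right (inv_mem h2))

lemma dichotomy {N : Subgroup G} [hN : N.Normal]
    (hmin : ∀ M : Subgroup G, M.Normal → M ≤ N → M ≠ ⊥ → M = N)
    (hab : ∀ x ∈ N, ∀ y ∈ N, x * y = y * x)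
    {g1 g2 : G} (hgen : Subgroup.closure {g1, g2} ⊔ N = ⊤)
    {n1 n2 : G} (h1 : n1 ∈ N) (h2 : n2 ∈ N) :
    Subgroup.closure {g1 * n1, g2 * n2} = ⊤ ∨
      Subgroup.closure {g1 * n1, g2 * n2} ⊓ N = ⊥ := by
  set K := Subgroup.closure {g1 * n1, g2 * n2} with hK
  have hKsup : K ⊔ N = ⊤ := sup_aux hgen h1 h2
  have hnormal : (K ⊓ N).Normal := by
    constructor
    intro x hx g
    have hg : g ∈ K ⊔ N := by rw [hKsup]; trivial
    obtain ⟨k, hk, m, hm, rfl⟩ := aux_mem_sup hg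
    have hfix : m * x * m⁻¹ = x := by
      have := hab m hm x hx.2
      rw [this]
      group
    have e : (k * m) * x * (k * m)⁻¹ = k * (m * x * m⁻¹) * k⁻¹ := by group
    rw [e, hfix]
    exact Subgroup.mem_inf.2 ⟨mul_mem (mul_mem hk hx.1) (inv_mem hk), hN.conj_mem x hx.2 k⟩
  by_cases hbot : K ⊓ N = ⊥
  · exact Or.inr hbot
  · left
    have hKN : K ⊓ N = N := hmin _ hnormal inf_le_right hbot
    have hNle : N ≤ K := by rw [← hKN]; exact inf_le_left
    rw [← hKsup, sup_of_le_left hNle]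

lemma bad_iff {N : Subgroup G} [N.Normal] {b1 b2 : G}
    (hH2 : Subgroup.closure {b1, b2} ⊔ N = ⊤) (p : G × G) :
    (∃ f : {f : G →* G // IsProjMod N f},
        ((b1⁻¹ * f.1 b1, b2⁻¹ * f.1 b2) : G × G) = p) ↔
      (p.1 ∈ N ∧ p.2 ∈ N ∧ Subgroup.closure {b1 * p.1, b2 * p.2} ⊓ N = ⊥) := by
  constructor
  · rintro ⟨⟨f, hf⟩, rfl⟩
    refine ⟨hf.2 b1, hf.2 b2, ?_⟩
    have hr := range_inf hf
    have hle : Subgroup.closure {b1 * (b1⁻¹ * f b1), b2 * (b2⁻¹ * f b2)} ≤ f.range := by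
      refine (Subgroup.closure_le _).2 ?_
      intro x hx
      simp only [Set.mem_insert_iff, Set.mem_singleton_iff] at hx
      rcases hx with h | h
      all_goals rw [h]
      · have e : b1 * (b1⁻¹ * f b1) = f b1 := by group
        rw [e]; exact ⟨b1, rfl⟩
      · have e : b2 * (b2⁻¹ * f b2) = f b2 := by group
        rw [e]; exact ⟨b2, rfl⟩
    rw [eq_bot_iff, ← hr]
    exact inf_le_inf_right _ hle
  · rintro ⟨hm1, hm2, hbot⟩
    have hsup : Subgroup.closure {b1 * p.1, b2 * p.2} ⊔ N = ⊤ := sup_aux hH2 hm1 hm2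
    obtain ⟨f, hf, hfix, -⟩ := exists_proj N _ hbot hsup
    refine ⟨⟨f, hf⟩, ?_⟩
    have hfb1 : f b1 = b1 * p.1 := by
      have h1m : f (b1 * p.1) = b1 * p.1 := hfix _ (Subgroup.subset_closure (by simp))
      have h2m : f (b1 * p.1) = f b1 * f p.1 := map_mul f _ _
      rw [hf.1 p.1 hm1, mul_one] at h2m
      rw [← h2m, h1m]
    have hfb2 : f b2 = b2 * p.2 := by
      have h1m : f (b2 * p.2) = b2 * p.2 := hfix _ (Subgroup.subset_closure (by simp))
      have h2m : f (b2 * p.2) = f b2 * f p.2 := map_mul f _ _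
      rw [hf.1 p.2 hm2, mul_one] at h2m
      rw [← h2m, h1m]
    have e1 : b1⁻¹ * f b1 = p.1 := by rw [hfb1]; group
    have e2 : b2⁻¹ * f b2 = p.2 := by rw [hfb2]; group
    exact Prod.ext e1 e2

lemma ev_inj {N : Subgroup G} {b1 b2 : G}
    (hb : Subgroup.closure {b1, b2} ⊔ N = ⊤) :
    Function.Injective (fun f : {f : G →* G // IsProjMod N f} =>
      ((b1⁻¹ * f.1 b1, b2⁻¹ * f.1 b2) : G × G)) := by
  intro f f' hff
  have e1 : f.1 b1 = f'.1 b1 := by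
    have := congrArg Prod.fst hff
    exact mul_left_cancel this
  have e2 : f.1 b2 = f'.1 b2 := by
    have := congrArg Prod.snd hff
    exact mul_left_cancel this
  apply Subtype.ext
  refine proj_ext f.2 f'.2 hb ?_
  intro x hx
  simp only [Set.mem_insert_iff, Set.mem_singleton_iff] at hx
  rcases hx with h | h
  all_goals rw [h]
  exacts [e1, e2]

lemma arith_aux_s5 {n d : ℕ} (hn : 3 ≤ n) (hd : d ∣ n * n) (hne : d ≠ n * n) :
    d + 2 * n ≤ n * n := by
  obtain ⟨k, hk⟩ := hd
  have hn0 : 0 < n := by omega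
  have hk0 : k ≠ 0 := by rintro rfl; simp at hk; omega
  have hk1 : k ≠ 1 := by rintro rfl; simp at hk; omega
  have hp : (k.minFac).Prime := Nat.minFac_prime hk1
  set p := k.minFac with hpdef
  have hpk : p ∣ k := Nat.minFac_dvd k
  have hpn : p ∣ n := by
    have h2 : p ∣ n ^ 2 := by rw [pow_two]; exact hk ▸ Dvd.dvd.mul_left hpk d
    exact hp.dvd_of_dvd_pow h2
  obtain ⟨m, hm⟩ := hpn
  obtain ⟨k', hk'⟩ := hpk
  have hp2 : 2 ≤ p := hp.two_le
  have hcancel : m * (p * m) = d * k' := by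
    have h1 : p * (m * (p * m)) = p * (d * k') := by
      calc p * (m * (p * m)) = (p * m) * (p * m) := by ring
        _ = n * n := by rw [← hm]
        _ = d * (p * k') := by rw [hk, hk']
        _ = p * (d * k') := by ring
    exact Nat.eq_of_mul_eq_mul_left (by omega) h1
  have hddvd : d ∣ p * (m * m) := ⟨k', by rw [← hcancel]; ring⟩
  have hm0 : 1 ≤ m := by
    rcases Nat.eq_zero_or_pos m with h0 | h
    · rw [h0, mul_zero] at hm; omega
    · omega
  have hdle : d ≤ p * (m * m) := Nat.le_of_dvd (by positivity) hddvd
  have hkey : m + 2 ≤ p * m := by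
    by_cases hm2 : 2 ≤ m
    · nlinarith
    · have hm1 : m = 1 := by omega
      subst hm1
      omega
  have hmul : (p * m) * (m + 2) ≤ (p * m) * (p * m) := Nat.mul_le_mul_left _ hkey
  subst hm
  nlinarith [hmul, hdle]

end Aux

/-- Let `G` be a finite 2-generated group, `N` an abelian minimal normal
subgroup of `G`, and `g1, g2 ∈ G` with `⟨g1, g2⟩N = G`. If `|N| > 2` or `N` has no
complement in `G`, then `|Φ_N(g1,g2)| ≥ 2·|N|`. -/
theorem stmt_5 {G : Type*} [Group G] [Finite G]
    (h2gen : ∃ a b : G, Subgroup.closure {a, b} = ⊤)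
    (N : Subgroup G) [N.Normal]
    (hNne : N ≠ ⊥)
    (hmin : ∀ M : Subgroup G, M.Normal → M ≤ N → M ≠ ⊥ → M = N)
    (hab : ∀ x ∈ N, ∀ y ∈ N, x * y = y * x)
    (g1 g2 : G) (hgen : Subgroup.closure {g1, g2} ⊔ N = ⊤)
    (h : 2 < Nat.card N ∨ ¬ ∃ H : Subgroup G, H ⊓ N = ⊥ ∧ H ⊔ N = ⊤) :
    2 * Nat.card N ≤
      Nat.card {q : G × G | q.1 ∈ N ∧ q.2 ∈ N ∧
        Subgroup.closure {g1 * q.1, g2 * q.2} = ⊤} := by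
  classical
  have hfin : Finite (G →* G) :=
    Finite.of_injective (fun f => (f : G → G)) DFunLike.coe_injective
  set n := Nat.card N with hn
  have hn2 : 2 ≤ n := by
    have : Nontrivial N := (Subgroup.nontrivial_iff_ne_bot N).2 hNne
    exact Finite.one_lt_card_iff_nontrivial.2 this
  set Φ : Set (G × G) := {q : G × G | q.1 ∈ N ∧ q.2 ∈ N ∧
    Subgroup.closure {g1 * q.1, g2 * q.2} = ⊤} with hΦdef
  set B : Set (G × G) := {q : G × G | q.1 ∈ N ∧ q.2 ∈ N ∧
    Subgroup.closure {g1 * q.1, g2 * q.2} ⊓ N = ⊥} with hBdef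
  have hS : Φ ∪ B = ↑(N.prod N) := by
    ext q
    simp only [Set.mem_union, hΦdef, hBdef, Set.mem_setOf_eq, SetLike.mem_coe,
      Subgroup.mem_prod]
    constructor
    · rintro (⟨ha, hb, -⟩ | ⟨ha, hb, -⟩) <;> exact ⟨ha, hb⟩
    · rintro ⟨ha, hb⟩
      rcases dichotomy hmin hab hgen ha hb with ht | hbot
      · exact Or.inl ⟨ha, hb, ht⟩
      · exact Or.inr ⟨ha, hb, hbot⟩
  have hdisj : Disjoint Φ B := by
    rw [Set.disjoint_left]
    rintro q ⟨-, -, ht⟩ ⟨-, -, hbot⟩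
    rw [ht, top_inf_eq] at hbot
    exact hNne hbot
  have hcard_prod : Nat.card (N.prod N) = n * n := by
    rw [Nat.card_congr (Subgroup.prodEquiv N N).toEquiv, Nat.card_prod]
  have hSn : (↑(N.prod N) : Set (G × G)).ncard = n * n := by
    rw [← Nat.card_coe_set_eq]
    exact hcard_prod
  have hsum : Φ.ncard + B.ncard = n * n := by
    rw [← Set.ncard_union_eq hdisj (Set.toFinite _) (Set.toFinite _), hS, hSn]
  rw [Nat.card_coe_set_eq]
  rcases B.eq_empty_or_nonempty with hBe | ⟨⟨a1, a2⟩, ha⟩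
  · rw [hBe, Set.ncard_empty] at hsum
    have h2n : 2 * n ≤ n * n := Nat.mul_le_mul_right n hn2
    omega
  · obtain ⟨ha1, ha2, hH1⟩ := ha
    have hH2 : Subgroup.closure {g1 * a1, g2 * a2} ⊔ N = ⊤ := sup_aux hgen ha1 ha2
    have hn3 : 3 ≤ n := by
      rcases h with h3 | hnc
      · omega
      · exact absurd ⟨_, hH1, hH2⟩ hnc
    obtain ⟨π₀, hπ₀, hπfix, -⟩ := exists_proj N _ hH1 hH2
    have hh1H : g1 * a1 ∈ Subgroup.closure {g1 * a1, g2 * a2} :=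
      Subgroup.subset_closure (by simp)
    have hh2H : g2 * a2 ∈ Subgroup.closure {g1 * a1, g2 * a2} :=
      Subgroup.subset_closure (by simp)
    set ev1 : {f : G →* G // IsProjMod N f} → G × G :=
      fun f => (((g1 * a1)⁻¹ * f.1 (g1 * a1), (g2 * a2)⁻¹ * f.1 (g2 * a2)) : G × G)
      with hev1
    let T : Subgroup (G × G) :=
      { carrier := Set.range ev1
        one_mem' := by
          refine ⟨⟨π₀, hπ₀⟩, ?_⟩
          simp only [hev1, hπfix _ hh1H, hπfix _ hh2H]
          exact Prod.ext (inv_mul_cancel _) (inv_mul_cancel _)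
        mul_mem' := by
          rintro p q ⟨f, rfl⟩ ⟨f', rfl⟩
          obtain ⟨m, hm, hmval⟩ := star_hom N hab π₀ f.1 f'.1 hπ₀ f.2 f'.2
          refine ⟨⟨m, hm⟩, ?_⟩
          simp only [hev1, Prod.mk_mul_mk]
          refine Prod.ext ?_ ?_
          · show (g1 * a1)⁻¹ * m (g1 * a1) = _
            rw [hmval, hπfix _ hh1H]
            group
          · show (g2 * a2)⁻¹ * m (g2 * a2) = _
            rw [hmval, hπfix _ hh2H]
            group
        inv_mem' := by
          rintro p ⟨f, rfl⟩
          obtain ⟨m, hm, hmval⟩ := inv_hom N hab π₀ f.1 hπ₀ f.2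
          refine ⟨⟨m, hm⟩, ?_⟩
          simp only [hev1, Prod.inv_mk]
          refine Prod.ext ?_ ?_
          · show (g1 * a1)⁻¹ * m (g1 * a1) = _
            rw [hmval, hπfix _ hh1H]
            group
          · show (g2 * a2)⁻¹ * m (g2 * a2) = _
            rw [hmval, hπfix _ hh2H]
            group }
    have hTmem : ∀ p : G × G, p ∈ T ↔
        (p.1 ∈ N ∧ p.2 ∈ N ∧
          Subgroup.closure {(g1 * a1) * p.1, (g2 * a2) * p.2} ⊓ N = ⊥) := by
      intro p
      exact (bad_iff hH2 p)
    have hTcard : Nat.card T = Nat.card {f : G →* G // IsProjMod N f} := by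
      have : (T : Set (G × G)) = Set.range ev1 := rfl
      rw [show (Nat.card T : ℕ) = Nat.card (Set.range ev1) from rfl]
      exact Nat.card_range_of_injective (ev_inj hH2)
    have hTle : T ≤ N.prod N := by
      intro p hp
      rw [hTmem] at hp
      exact Subgroup.mem_prod.2 ⟨hp.1, hp.2.1⟩
    have hTdvd : Nat.card T ∣ n * n := hcard_prod ▸ Subgroup.card_dvd_of_le hTle
    -- bijection between B and T
    have hψinj : Function.Injective
        (fun p : G × G => ((a1⁻¹ * p.1, a2⁻¹ * p.2) : G × G)) := by
      intro p q hpq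
      have e1 := congrArg Prod.fst hpq
      have e2 := congrArg Prod.snd hpq
      exact Prod.ext (mul_left_cancel e1) (mul_left_cancel e2)
    have hqiff : ∀ q : G × G, q ∈ B ↔ ((a1⁻¹ * q.1, a2⁻¹ * q.2) : G × G) ∈ T := by
      intro q
      rw [hTmem]
      have e1 : (g1 * a1) * (a1⁻¹ * q.1) = g1 * q.1 := by group
      have e2 : (g2 * a2) * (a2⁻¹ * q.2) = g2 * q.2 := by group
      simp only [hBdef, Set.mem_setOf_eq, e1, e2]
      constructor
      · rintro ⟨hq1, hq2, hq3⟩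
        exact ⟨mul_mem (inv_mem ha1) hq1, mul_mem (inv_mem ha2) hq2, hq3⟩
      · rintro ⟨hq1, hq2, hq3⟩
        have m1 : q.1 ∈ N := by
          have := mul_mem ha1 hq1
          rwa [mul_inv_cancel_left] at this
        have m2 : q.2 ∈ N := by
          have := mul_mem ha2 hq2
          rwa [mul_inv_cancel_left] at this
        exact ⟨m1, m2, hq3⟩
    have hBT : (fun p : G × G => ((a1⁻¹ * p.1, a2⁻¹ * p.2) : G × G)) '' B
        = (T : Set (G × G)) := by
      ext p
      constructor
      · rintro ⟨q, hq, rfl⟩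
        exact (hqiff q).1 hq
      · intro hp
        refine ⟨(a1 * p.1, a2 * p.2), ?_, ?_⟩
        · rw [hqiff]
          have e1 : a1⁻¹ * (a1 * p.1) = p.1 := by group
          have e2 : a2⁻¹ * (a2 * p.2) = p.2 := by group
          simp only [e1, e2]
          exact hp
        · exact Prod.ext (by group) (by group)
    have hBcard : B.ncard = Nat.card T := by
      rw [← Set.ncard_image_of_injective B hψinj, hBT, ← Nat.card_coe_set_eq]
      rfl
    -- T is proper in N.prod N
    have hTne : Nat.card T ≠ n * n := by
      intro hfull
      obtain ⟨x1, x2, hx⟩ := h2gen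
      have hm1 : (π₀ x1)⁻¹ * x1 ∈ N := by
        have e : (π₀ x1)⁻¹ * x1 = (x1⁻¹ * π₀ x1)⁻¹ := by group
        rw [e]
        exact inv_mem (hπ₀.2 x1)
      have hm2 : (π₀ x2)⁻¹ * x2 ∈ N := by
        have e : (π₀ x2)⁻¹ * x2 = (x2⁻¹ * π₀ x2)⁻¹ := by group
        rw [e]
        exact inv_mem (hπ₀.2 x2)
      have hc : Subgroup.closure {π₀ x1, π₀ x2} ⊔ N = ⊤ := by
        apply top_unique
        rw [← hx]
        refine (Subgroup.closure_le _).2 ?_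
        intro x hx'
        simp only [Set.mem_insert_iff, Set.mem_singleton_iff] at hx'
        rcases hx' with hh | hh
        all_goals rw [hh]
        · show x1 ∈ Subgroup.closure {π₀ x1, π₀ x2} ⊔ N
          have e : x1 = π₀ x1 * ((π₀ x1)⁻¹ * x1) := by group
          rw [e]
          exact mul_mem (Subgroup.mem_sup_left (Subgroup.subset_closure (by simp)))
            (Subgroup.mem_sup_right hm1)
        · show x2 ∈ Subgroup.closure {π₀ x1, π₀ x2} ⊔ N
          have e : x2 = π₀ x2 * ((π₀ x2)⁻¹ * x2) := by group
          rw [e]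
          exact mul_mem (Subgroup.mem_sup_left (Subgroup.subset_closure (by simp)))
            (Subgroup.mem_sup_right hm2)
      set ev2 : {f : G →* G // IsProjMod N f} → G × G :=
        fun f => (((π₀ x1)⁻¹ * f.1 (π₀ x1), (π₀ x2)⁻¹ * f.1 (π₀ x2)) : G × G) with hev2
      have hinj2 : Function.Injective ev2 := ev_inj hc
      have hr2 : Set.range ev2 ⊆ ↑(N.prod N) := by
        rintro p ⟨f, rfl⟩
        exact Subgroup.mem_prod.2 ⟨f.2.2 _, f.2.2 _⟩
      have hr2card : (Set.range ev2).ncard = n * n := by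
        rw [← Nat.card_coe_set_eq, Nat.card_range_of_injective hinj2, ← hTcard, hfull]
      have heq : Set.range ev2 = ↑(N.prod N) :=
        Set.eq_of_subset_of_ncard_le hr2 (by rw [hr2card, hSn]) (Set.toFinite _)
      have hmem : (((π₀ x1)⁻¹ * x1, (π₀ x2)⁻¹ * x2) : G × G) ∈ (↑(N.prod N) : Set (G × G)) :=
        Subgroup.mem_prod.2 ⟨hm1, hm2⟩
      rw [← heq] at hmem
      obtain ⟨f, hf⟩ := hmem
      have hf1 : f.1 (π₀ x1) = x1 := mul_left_cancel (congrArg Prod.fst hf)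
      have hf2 : f.1 (π₀ x2) = x2 := mul_left_cancel (congrArg Prod.snd hf)
      have hrange : Subgroup.closure {x1, x2} ≤ f.1.range := by
        refine (Subgroup.closure_le _).2 ?_
        intro x hx'
        simp only [Set.mem_insert_iff, Set.mem_singleton_iff] at hx'
        rcases hx' with hh | hh
        all_goals rw [hh]
        · exact ⟨π₀ x1, hf1⟩
        · exact ⟨π₀ x2, hf2⟩
      have htop : f.1.range = ⊤ := top_unique (hx ▸ hrange)
      have := range_inf f.2
      rw [htop, top_inf_eq] at this
      exact hNne this
    have harith := arith_aux_s5 hn3 hTdvd hTne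
    omega
end

section
/- Let G be a finite 2-generated group and let N be a minimal normal subgroup of G of order 2 that has a complement H in G. Then the number of complements of N in G equals 1 if H has no epimorphic image of order 2, and equals 2 if H has an epimorphic image of order 2. -/
open Multiplicative Pointwise

abbrev Stmt6Z2 := Multiplicative (ZMod 2)

lemma stmt6_z2cases : ∀ x : Stmt6Z2, x = 1 ∨ x = ofAdd 1 := by decide

lemma stmt6_z2flip : ∀ x v : Stmt6Z2, x ≠ v → ofAdd 1 * x = v := by decide

set_option synthInstance.maxSize 2000 in
set_option maxHeartbeats 1000000 in
lemma stmt6_M3_not : ∀ u v : Stmt6Z2 × Stmt6Z2 × Stmt6Z2,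
    ¬ ∀ z, z = 1 ∨ z = u ∨ z = v ∨ z = u * v := by decide

lemma stmt6_closure_two {M : Type*} [CommGroup M] (hsq : ∀ x : M, x * x = 1) (u v : M) :
    ∀ z ∈ Subgroup.closure ({u, v} : Set M), z = 1 ∨ z = u ∨ z = v ∨ z = u * v := by
  intro z hz
  induction hz using Subgroup.closure_induction with
  | mem x hx => rcases hx with rfl | rfl <;> tauto
  | one => tauto
  | inv x hx ih =>
    have hx2 : ∀ y : M, y⁻¹ = y := fun y => by
      rw [inv_eq_iff_mul_eq_one]; exact hsq y
    rw [hx2]; exact ih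
  | mul x y hx hy ihx ihy =>
    have h1 : u * (u * v) = v := by rw [← mul_assoc, hsq, one_mul]
    have h2 : v * (u * v) = u := by rw [mul_comm u v, ← mul_assoc, hsq, one_mul]
    have h3 : (u * v) * (u * v) = 1 := hsq _
    have h4 : (u * v) * u = v := by rw [mul_comm, h1]
    have h5 : (u * v) * v = u := by rw [mul_comm, h2]
    rcases ihx with hx' | hx' | hx' | hx' <;> rcases ihy with hy' | hy' | hy' | hy' <;>
      rw [hx', hy'] <;>
      simp only [one_mul, mul_one, hsq, h1, h2, h3, h4, h5, mul_comm v u] <;> tauto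

lemma stmt6_not_2gen {G : Type*} [Group G] {a b : G}
    (hab : Subgroup.closure ({a, b} : Set G) = ⊤)
    (Φ : G →* Stmt6Z2 × Stmt6Z2 × Stmt6Z2) (hΦ : Function.Surjective Φ) : False := by
  have h1 : Subgroup.map Φ (Subgroup.closure {a, b}) = ⊤ := by
    rw [hab]; exact Subgroup.map_top_of_surjective Φ hΦ
  rw [MonoidHom.map_closure] at h1
  have h2 : (⇑Φ '' {a, b}) = {Φ a, Φ b} := by simp [Set.image_insert_eq]
  rw [h2] at h1
  have hsq : ∀ x : Stmt6Z2 × Stmt6Z2 × Stmt6Z2, x * x = 1 := by decide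
  exact stmt6_M3_not (Φ a) (Φ b) fun z => stmt6_closure_two hsq _ _ z (h1 ▸ Subgroup.mem_top z)

section Aux

variable {G : Type*} [Group G]

lemma stmt6_excl {n : G} {L : Subgroup G} (hnL : n ∉ L) {x : G} (hx : x ∈ L)
    (hxn : x * n ∈ L) : False := hnL (by simpa using mul_mem (inv_mem hx) hxn)

lemma stmt6_mem_mul_iff {n : G} {L : Subgroup G} (hn2 : n * n = 1)
    (hc : ∀ g : G, g * n = n * g)
    (hnL : n ∉ L) (hL : ∀ g : G, g ∈ L ∨ g * n ∈ L) (g g' : G) :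
    g * g' ∈ L ↔ (g ∈ L ↔ g' ∈ L) := by
  constructor
  · intro h
    constructor
    · intro hg
      have := mul_mem (inv_mem hg) h
      simpa [← mul_assoc] using this
    · intro hg'
      have := mul_mem h (inv_mem hg')
      simpa [mul_assoc] using this
  · intro hiff
    by_cases hg : g ∈ L
    · exact mul_mem hg (hiff.mp hg)
    · have hg' : g' ∉ L := fun h => hg (hiff.mpr h)
      have h1 : g * n ∈ L := (hL g).resolve_left hg
      have h2 : g' * n ∈ L := (hL g').resolve_left hg'
      have he : (g * n) * (g' * n) = g * g' := by
        calc (g * n) * (g' * n) = g * ((n * g') * n) := by rw [mul_assoc, mul_assoc]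
        _ = g * ((g' * n) * n) := by rw [hc g']
        _ = g * (g' * (n * n)) := by rw [mul_assoc]
        _ = g * g' := by rw [hn2, mul_one]
      have := mul_mem h1 h2
      rwa [he] at this

open Classical in
/-- membership character of a complement, restricted to `H` -/
noncomputable def stmt6_rhom (n : G) (L : Subgroup G) (hn2 : n * n = 1)
    (hc : ∀ g : G, g * n = n * g)
    (hnL : n ∉ L) (hL : ∀ g : G, g ∈ L ∨ g * n ∈ L) (H : Subgroup G) : H →* Stmt6Z2 where
  toFun h := ofAdd (if (h : G) ∈ L then 0 else 1)
  map_one' := by simp [Subgroup.one_mem]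
  map_mul' x y := by
    have hmm := stmt6_mem_mul_iff hn2 hc hnL hL (x : G) (y : G)
    simp only [Subgroup.coe_mul]
    by_cases hx : (x : G) ∈ L <;> by_cases hy : (y : G) ∈ L
    · have hxy : (x : G) * (y : G) ∈ L := hmm.mpr (iff_of_true hx hy)
      simp [hx, hy, hxy]
    · have hxy : ¬ ((x : G) * (y : G) ∈ L) := fun h => hy ((hmm.mp h).mp hx)
      simp [hx, hy, hxy] <;> decide
    · have hxy : ¬ ((x : G) * (y : G) ∈ L) := fun h => hx ((hmm.mp h).mpr hy)
      simp [hx, hy, hxy] <;> decide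
    · have hxy : (x : G) * (y : G) ∈ L := hmm.mpr (iff_of_false hx hy)
      simp [hx, hy, hxy] <;> decide

lemma stmt6_rhom_eq_one_iff {n : G} {L : Subgroup G} {hn2 hc hnL hL} {H : Subgroup G} (h : H) :
    stmt6_rhom n L hn2 hc hnL hL H h = 1 ↔ (h : G) ∈ L := by
  classical
  simp only [stmt6_rhom, MonoidHom.coe_mk, OneHom.coe_mk]
  by_cases hh : (h : G) ∈ L <;> simp [hh] <;> decide

open Classical in
/-- extend a hom `H →* Z2` to `G`, sending `n` to `ofAdd 1`. -/
noncomputable def stmt6_ext2 (n : G) (H : Subgroup G) (hn2 : n * n = 1)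
    (hc : ∀ g : G, g * n = n * g) (hH : ∀ g : G, g ∈ H ∨ g * n ∈ H)
    (f : H →* Stmt6Z2) : G →* Stmt6Z2 where
  toFun g := if hg : g ∈ H then f ⟨g, hg⟩ else f ⟨g * n, (hH g).resolve_left hg⟩ * ofAdd 1
  map_one' := by
    rw [dif_pos (Subgroup.one_mem H)]
    exact map_one f
  map_mul' g g' := by
    by_cases hg : g ∈ H <;> by_cases hg' : g' ∈ H
    · have hgg : g * g' ∈ H := mul_mem hg hg'
      rw [dif_pos hg, dif_pos hg', dif_pos hgg, ← map_mul]
      rfl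
    · have hgg : ¬ (g * g' ∈ H) := fun h =>
        hg' (by simpa [← mul_assoc] using mul_mem (inv_mem hg) h)
      rw [dif_pos hg, dif_neg hg', dif_neg hgg]
      have he : (⟨g * g' * n, (hH _).resolve_left hgg⟩ : H)
          = ⟨g, hg⟩ * ⟨g' * n, (hH g').resolve_left hg'⟩ := by
        ext; simp [mul_assoc]
      rw [he, map_mul, mul_assoc]
    · have hgg : ¬ (g * g' ∈ H) := fun h =>
        hg (by simpa [mul_assoc] using mul_mem h (inv_mem hg'))
      rw [dif_neg hg, dif_pos hg', dif_neg hgg]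
      have he : (⟨g * g' * n, (hH _).resolve_left hgg⟩ : H)
          = ⟨g * n, (hH g).resolve_left hg⟩ * ⟨g', hg'⟩ := by
        ext
        show g * g' * n = (g * n) * g'
        rw [mul_assoc, hc g', ← mul_assoc]
      rw [he, map_mul]
      exact mul_right_comm _ _ _
    · have h1 : g * n ∈ H := (hH g).resolve_left hg
      have h2 : g' * n ∈ H := (hH g').resolve_left hg'
      have he2 : (g * n) * (g' * n) = g * g' := by
        calc (g * n) * (g' * n) = g * ((n * g') * n) := by rw [mul_assoc, mul_assoc]
        _ = g * ((g' * n) * n) := by rw [hc g']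
        _ = g * (g' * (n * n)) := by rw [mul_assoc]
        _ = g * g' := by rw [hn2, mul_one]
      have hgg : g * g' ∈ H := he2 ▸ mul_mem h1 h2
      rw [dif_neg hg, dif_neg hg', dif_pos hgg]
      have he : (⟨g * g', hgg⟩ : H) = ⟨g * n, h1⟩ * ⟨g' * n, h2⟩ := by ext; exact he2.symm
      rw [he, map_mul]
      have : ∀ a b : Stmt6Z2, a * b = a * ofAdd 1 * (b * ofAdd 1) := by decide
      exact this _ _

lemma stmt6_ext2_coe {n : G} {H : Subgroup G} {hn2 hc hH} (f : H →* Stmt6Z2) (h : H) :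
    stmt6_ext2 n H hn2 hc hH f (h : G) = f h := by
  simp only [stmt6_ext2, MonoidHom.coe_mk, OneHom.coe_mk]
  rw [dif_pos h.2]

lemma stmt6_ext2_n {n : G} {H : Subgroup G} {hn2 hc hH} (hnH : n ∉ H) (f : H →* Stmt6Z2) :
    stmt6_ext2 n H hn2 hc hH f n = ofAdd 1 := by
  simp only [stmt6_ext2, MonoidHom.coe_mk, OneHom.coe_mk]
  rw [dif_neg hnH]
  have : (⟨n * n, (hH n).resolve_left hnH⟩ : H) = 1 := by ext; exact hn2
  rw [this, map_one, one_mul]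

lemma stmt6_joint_surj {H : Type*} [Group H] (p q : H →* Stmt6Z2)
    {h₁ : H} (hd : p h₁ ≠ q h₁) {h₂ : H} (hq2 : q h₂ ≠ 1) {h₃ : H} (hp3 : p h₃ ≠ 1) :
    ∀ u v : Stmt6Z2, ∃ h : H, p h = u ∧ q h = v := by
  intro u v
  rcases stmt6_z2cases (p h₁) with hp1 | hp1
  · -- p h₁ = 1, so q h₁ = ofAdd 1
    have hq1 : q h₁ = ofAdd 1 := by
      rcases stmt6_z2cases (q h₁) with h | h
      · exact absurd (hp1.trans h.symm) hd
      · exact h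
    -- generator flipping q only; h₃ flips p
    set g₀ : H := if u = 1 then 1 else h₃ with hg₀
    have hpg₀ : p g₀ = u := by
      rcases stmt6_z2cases u with rfl | rfl
      · rw [hg₀, if_pos rfl, map_one]
      · rw [hg₀, if_neg (by decide)]
        rcases stmt6_z2cases (p h₃) with h | h
        · exact absurd h hp3
        · exact h
    by_cases hqg : q g₀ = v
    · exact ⟨g₀, hpg₀, hqg⟩
    · refine ⟨h₁ * g₀, ?_, ?_⟩
      · rw [map_mul, hp1, one_mul, hpg₀]
      · rw [map_mul, hq1]
        exact stmt6_z2flip _ _ hqg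
  · -- p h₁ = ofAdd 1, so q h₁ = 1
    have hq1 : q h₁ = 1 := by
      rcases stmt6_z2cases (q h₁) with h | h
      · exact h
      · exact absurd (hp1.trans h.symm) hd
    set g₀ : H := if v = 1 then 1 else h₂ with hg₀
    have hqg₀ : q g₀ = v := by
      rcases stmt6_z2cases v with rfl | rfl
      · rw [hg₀, if_pos rfl, map_one]
      · rw [hg₀, if_neg (by decide)]
        rcases stmt6_z2cases (q h₂) with h | h
        · exact absurd h hq2
        · exact h
    by_cases hpg : p g₀ = u
    · exact ⟨g₀, hpg, hqg₀⟩
    · refine ⟨h₁ * g₀, ?_, ?_⟩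
      · rw [map_mul, hp1]
        exact stmt6_z2flip _ _ hpg
      · rw [map_mul, hq1, one_mul, hqg₀]

end Aux
/-- Let `G` be a finite 2-generated group and `N` a minimal normal subgroup
of `G` of order 2 with a complement `H` in `G`. Then the number of complements of `N` in
`G` equals 1 if `H` has no epimorphic image of order 2, and equals 2 if it has one. -/
theorem stmt_6 {G : Type*} [Group G] [Finite G]
    (h2gen : ∃ a b : G, Subgroup.closure {a, b} = ⊤)
    (N : Subgroup G) [N.Normal]
    (hNne : N ≠ ⊥)
    (hmin : ∀ M : Subgroup G, M.Normal → M ≤ N → M ≠ ⊥ → M = N)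
    (hcard : Nat.card N = 2)
    (H : Subgroup G) (hcompl : H ⊓ N = ⊥ ∧ H ⊔ N = ⊤) :
    (¬ (∃ f : H →* Multiplicative (ZMod 2), Function.Surjective f) →
      Nat.card {K : Subgroup G // K ⊓ N = ⊥ ∧ K ⊔ N = ⊤} = 1) ∧
    ((∃ f : H →* Multiplicative (ZMod 2), Function.Surjective f) →
      Nat.card {K : Subgroup G // K ⊓ N = ⊥ ∧ K ⊔ N = ⊤} = 2) := by
  classical
  obtain ⟨hHN, hHNs⟩ := id hcompl
  -- extract the nontrivial element `n` of `N`
  obtain ⟨x, y, hxy, hxyu⟩ := Nat.card_eq_two_iff.mp hcard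
  have h1mem : (1 : N) ∈ ({x, y} : Set N) := by rw [hxyu]; trivial
  have key : ∃ m : N, m ≠ 1 ∧ ∀ z : N, z = 1 ∨ z = m := by
    have hall : ∀ z : N, z = x ∨ z = y := fun z => by
      have : z ∈ ({x, y} : Set N) := by rw [hxyu]; trivial
      exact this
    rcases h1mem with h | h
    · refine ⟨y, fun hy => hxy (h.symm.trans hy.symm), fun z => ?_⟩
      rcases hall z with hz | hz
      · left; rw [hz, ← h]
      · right; exact hz
    · rw [Set.mem_singleton_iff] at h
      refine ⟨x, fun hx => hxy (hx.trans h), fun z => ?_⟩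
      rcases hall z with hz | hz
      · right; exact hz
      · left; rw [hz, ← h]
  obtain ⟨m, hm1, hmall⟩ := key
  have hnN : (m : G) ∈ N := m.2
  set n : G := (m : G) with hndef
  have hn1 : n ≠ 1 := fun h => hm1 (Subtype.ext h)
  have hNmem : ∀ g ∈ N, g = 1 ∨ g = n := fun g hg => by
    rcases hmall ⟨g, hg⟩ with h | h
    · left; exact congrArg Subtype.val h
    · right; exact congrArg Subtype.val h
  have hn2 : n * n = 1 := by
    rcases hNmem (n * n) (mul_mem hnN hnN) with h | h
    · exact h
    · exact absurd (mul_right_cancel (h.trans (one_mul n).symm)) hn1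
  have hc : ∀ g : G, g * n = n * g := by
    intro g
    have hgng : g * n * g⁻¹ ∈ N := Subgroup.Normal.conj_mem ‹N.Normal› n hnN g
    rcases hNmem _ hgng with h | h
    · exfalso
      apply hn1
      have h2 : n = g⁻¹ * (g * n * g⁻¹) * g := by group
      rw [h] at h2
      simpa using h2
    · have h2 : g * n = (g * n * g⁻¹) * g := by group
      rw [h] at h2
      exact h2
  -- complement characterization
  have compl_iff : ∀ K : Subgroup G,
      (K ⊓ N = ⊥ ∧ K ⊔ N = ⊤) ↔ (n ∉ K ∧ ∀ g : G, g ∈ K ∨ g * n ∈ K) := by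
    intro K
    constructor
    · rintro ⟨hKN, hKs⟩
      refine ⟨fun h => hn1 ?_, ?_⟩
      · have : n ∈ K ⊓ N := ⟨h, hnN⟩
        rwa [hKN, Subgroup.mem_bot] at this
      · intro g
        have hg : g ∈ (K : Set G) * (N : Set G) := by
          rw [← Subgroup.mul_normal, hKs]
          exact Subgroup.mem_top g
        obtain ⟨k, hk, z, hzN, hmul⟩ := hg
        rcases hNmem z hzN with rfl | rfl
        · left; rw [← hmul]; simpa using hk
        · right; rw [← hmul]; simpa [mul_assoc, hn2] using hk
    · rintro ⟨hnK, hK⟩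
      constructor
      · rw [eq_bot_iff]
        rintro z ⟨hzK, hzN⟩
        rcases hNmem z hzN with rfl | rfl
        · exact Subgroup.mem_bot.mpr rfl
        · exact absurd hzK hnK
      · rw [eq_top_iff]
        intro g _
        rcases hK g with h | h
        · exact Subgroup.mem_sup_left h
        · have hg : g = (g * n) * n⁻¹ := by group
          rw [hg]
          exact mul_mem (Subgroup.mem_sup_left h) (Subgroup.mem_sup_right (inv_mem hnN))
  obtain ⟨hnH, hH2⟩ := (compl_iff H).mp hcompl
  -- a complement containing H (on H) equals H
  have eq_of_le : ∀ L : Subgroup G, n ∉ L → (∀ h ∈ H, h ∈ L) → L = H := by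
    intro L hnL hHL
    ext g
    constructor
    · intro hgL
      by_cases hgH : g ∈ H
      · exact hgH
      · exact absurd hgL fun hgL =>
          stmt6_excl hnL hgL (hHL _ ((hH2 g).resolve_left hgH))
    · exact hHL g
  constructor
  · -- case 1 : no epimorphic image of order 2
    intro hno
    rw [Nat.card_eq_one_iff_unique]
    have main : ∀ K : Subgroup G, (K ⊓ N = ⊥ ∧ K ⊔ N = ⊤) → K = H := by
      intro K hK
      obtain ⟨hnK, hK2⟩ := (compl_iff K).mp hK
      apply eq_of_le K hnK
      intro h hh
      by_contra hKh
      apply hno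
      refine ⟨stmt6_rhom n K hn2 hc hnK hK2 H, fun u => ?_⟩
      rcases stmt6_z2cases u with rfl | rfl
      · exact ⟨1, map_one _⟩
      · refine ⟨⟨h, hh⟩, ?_⟩
        rcases stmt6_z2cases (stmt6_rhom n K hn2 hc hnK hK2 H ⟨h, hh⟩) with h1 | h1
        · exact absurd ((stmt6_rhom_eq_one_iff _).mp h1) hKh
        · exact h1
    refine ⟨⟨fun K K' => ?_⟩, ⟨⟨H, hcompl⟩⟩⟩
    obtain ⟨K, hK⟩ := K
    obtain ⟨K', hK'⟩ := K'
    simp only [Subtype.mk.injEq]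
    rw [main K hK, main K' hK']
  · -- case 2 : `f : H →* Z2` surjective
    rintro ⟨f, hf⟩
    obtain ⟨a, b, hab⟩ := h2gen
    set K : Subgroup G := (stmt6_ext2 n H hn2 hc hH2 f).ker with hKdef
    have hmemK : ∀ g : G, g ∈ K ↔ stmt6_ext2 n H hn2 hc hH2 f g = 1 := fun g => Iff.rfl
    have hnK : n ∉ K := by
      rw [hmemK, stmt6_ext2_n hnH]
      decide
    have hK2 : ∀ g : G, g ∈ K ∨ g * n ∈ K := by
      intro g
      rcases stmt6_z2cases (stmt6_ext2 n H hn2 hc hH2 f g) with h | h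
      · left; exact (hmemK g).mpr h
      · right
        rw [hmemK, map_mul, h, stmt6_ext2_n hnH]
        decide
    have hKcompl : K ⊓ N = ⊥ ∧ K ⊔ N = ⊤ := (compl_iff K).mpr ⟨hnK, hK2⟩
    obtain ⟨h₀, hh₀⟩ : ∃ h : H, f h = ofAdd 1 := hf (ofAdd 1)
    have hf0 : f h₀ ≠ 1 := by rw [hh₀]; decide
    have hHK : H ≠ K := by
      intro he
      have h1 : (h₀ : G) ∈ K := he ▸ h₀.2
      rw [hmemK, stmt6_ext2_coe, hh₀] at h1
      exact absurd h1 (by decide)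
    rw [Nat.card_eq_two_iff]
    refine ⟨⟨H, hcompl⟩, ⟨K, hKcompl⟩, fun he => hHK (congrArg Subtype.val he), ?_⟩
    rw [Set.eq_univ_iff_forall]
    rintro ⟨L, hL⟩
    obtain ⟨hnL, hL2⟩ := (compl_iff L).mp hL
    simp only [Set.mem_insert_iff, Set.mem_singleton_iff, Subtype.mk.injEq]
    by_cases hcase1 : ∀ h ∈ H, h ∈ L
    · left; exact eq_of_le L hnL hcase1
    · by_cases hcase2 : ∀ h : H, ((h : G) ∈ L ↔ f h = 1)
      · right
        ext g
        rw [hmemK]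
        by_cases hg : g ∈ H
        · rw [show stmt6_ext2 n H hn2 hc hH2 f g = f ⟨g, hg⟩ from stmt6_ext2_coe f ⟨g, hg⟩]
          exact hcase2 ⟨g, hg⟩
        · have h1 : g * n ∈ H := (hH2 g).resolve_left hg
          have hFg : stmt6_ext2 n H hn2 hc hH2 f g = f ⟨g * n, h1⟩ * ofAdd 1 := by
            simp only [stmt6_ext2, MonoidHom.coe_mk, OneHom.coe_mk]
            rw [dif_neg hg]
          have hgL : g ∈ L ↔ ¬ (g * n ∈ L) := by
            constructor
            · intro h hgn; exact stmt6_excl hnL h hgn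
            · intro h
              have h2 := (hL2 (g * n)).resolve_left h
              rwa [mul_assoc, hn2, mul_one] at h2
          have hc2 : g * n ∈ L ↔ f ⟨g * n, h1⟩ = 1 := hcase2 ⟨g * n, h1⟩
          rw [hgL, hc2, hFg]
          rcases stmt6_z2cases (f ⟨g * n, h1⟩) with h | h <;> rw [h] <;>
            simp <;> decide
      · -- impossible : contradicts 2-generation
        exfalso
        push_neg at hcase1
        obtain ⟨h0g, hh0H, hh0L⟩ := hcase1
        have hq0 : stmt6_rhom n L hn2 hc hnL hL2 H ⟨h0g, hh0H⟩ ≠ 1 :=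
          fun h => hh0L ((stmt6_rhom_eq_one_iff _).mp h)
        obtain ⟨h1, hh1⟩ : ∃ h : H, f h ≠ stmt6_rhom n L hn2 hc hnL hL2 H h := by
          by_contra hall
          push_neg at hall
          apply hcase2
          intro h
          rw [hall h]
          exact (stmt6_rhom_eq_one_iff h).symm
        have js := stmt6_joint_surj f (stmt6_rhom n L hn2 hc hnL hL2 H) hh1 hq0 hf0
        apply stmt6_not_2gen hab
          ((stmt6_ext2 n H hn2 hc hH2 f).prod
            (((stmt6_ext2 n H hn2 hc hH2 (stmt6_rhom n L hn2 hc hnL hL2 H)).prod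
              (stmt6_ext2 n H hn2 hc hH2 (1 : H →* Stmt6Z2)))))
        rintro ⟨u, v, w⟩
        rcases stmt6_z2cases w with rfl | rfl
        · obtain ⟨h, hp, hq⟩ := js u v
          refine ⟨(h : G), ?_⟩
          simp only [MonoidHom.prod_apply]
          rw [stmt6_ext2_coe, stmt6_ext2_coe, stmt6_ext2_coe, hp, hq]
          rfl
        · obtain ⟨h, hp, hq⟩ := js (u * ofAdd 1) (v * ofAdd 1)
          refine ⟨(h : G) * n, ?_⟩
          simp only [MonoidHom.prod_apply, map_mul]
          rw [stmt6_ext2_coe, stmt6_ext2_coe, stmt6_ext2_coe,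
            stmt6_ext2_n hnH, stmt6_ext2_n hnH, stmt6_ext2_n hnH, hp, hq]
          have hx : ∀ x : Stmt6Z2, x * ofAdd 1 * ofAdd 1 = x := by decide
          simp only [Prod.mk_mul_mk, MonoidHom.one_apply, hx, one_mul]
end

section
/- Let G be a finite group, let N be a normal subgroup of G, and let g1, g2, h1, h2 be elements of G such that ⟨g1, g2⟩N = G and ⟨h1, h2⟩N = G. Then the sets Φ_N(g1,g2) and Φ_N(h1,h2) have the same cardinality; that is, the number of pairs (n1, n2) ∈ N × N with ⟨g1·n1, g2·n2⟩ = G does not depend on the choice of g1, g2. -/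
open Subgroup Finset

section Aux

attribute [local instance] Fintype.ofFinite

variable {G : Type*} [Group G] [Finite G] (N : Subgroup G) [N.Normal]

open scoped Classical

/-- The pairs `(n1,n2) ∈ N × N` with `⟨g1 n1, g2 n2⟩ = H`, as a finset. -/
noncomputable def phiF (g1 g2 : G) (H : Subgroup G) : Finset (G × G) :=
  Finset.univ.filter fun q => q.1 ∈ N ∧ q.2 ∈ N ∧ closure {g1 * q.1, g2 * q.2} = H

lemma cardA (H : Subgroup G) (g : G) (hx : ∃ n0 ∈ N, g * n0 ∈ H) :
    (Finset.univ.filter fun n => n ∈ N ∧ g * n ∈ H).card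
      = (Finset.univ.filter fun n => n ∈ N ∧ n ∈ H).card := by
  obtain ⟨n0, hn0N, hn0H⟩ := hx
  apply Finset.card_bij' (fun n _ => n0⁻¹ * n) (fun m _ => n0 * m)
  · intro n hn
    simp only [Finset.mem_filter, Finset.mem_univ, true_and] at hn ⊢
    refine ⟨N.mul_mem (N.inv_mem hn0N) hn.1, ?_⟩
    have h : n0⁻¹ * n = (g * n0)⁻¹ * (g * n) := by group
    rw [h]
    exact H.mul_mem (H.inv_mem hn0H) hn.2
  · intro m hm
    simp only [Finset.mem_filter, Finset.mem_univ, true_and] at hm ⊢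
    refine ⟨N.mul_mem hn0N hm.1, ?_⟩
    have h : g * (n0 * m) = (g * n0) * m := by group
    rw [h]
    exact H.mul_mem hn0H hm.2
  · intro n _; group
  · intro m _; group

lemma exists_n0 {H : Subgroup G} (hH : H ⊔ N = ⊤) (g : G) : ∃ n0 ∈ N, g * n0 ∈ H := by
  have hg : g ∈ ((H ⊔ N : Subgroup G) : Set G) := by rw [hH]; trivial
  rw [Subgroup.mul_normal] at hg
  obtain ⟨h, hh, n, hn, rfl⟩ := hg
  exact ⟨n⁻¹, N.inv_mem hn, by simpa using hh⟩

lemma partitionSum (g1 g2 : G) (H : Subgroup G) :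
    ∑ K ∈ Finset.univ.filter (· ≤ H), (phiF N g1 g2 K).card
      = (Finset.univ.filter fun q : G × G =>
          q.1 ∈ N ∧ q.2 ∈ N ∧ g1 * q.1 ∈ H ∧ g2 * q.2 ∈ H).card := by
  rw [← Finset.card_biUnion]
  · congr 1
    ext q
    simp only [Finset.mem_biUnion, Finset.mem_filter, Finset.mem_univ, true_and, phiF]
    constructor
    · rintro ⟨K, hKH, h1, h2, rfl⟩
      refine ⟨h1, h2, ?_, ?_⟩ <;> apply hKH <;>
        [exact subset_closure (by simp); exact subset_closure (by simp)]
    · rintro ⟨h1, h2, hq1, hq2⟩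
      exact ⟨closure {g1 * q.1, g2 * q.2},
        (closure_le H).2 (by simp [Set.insert_subset_iff, hq1, hq2]), h1, h2, rfl⟩
  · intro K _ K' _ hKK'
    simp only [Finset.disjoint_left, phiF, Finset.mem_filter]
    rintro q ⟨_, _, _, rfl⟩ ⟨_, _, _, h⟩
    exact hKK' h

lemma prodCard (g1 g2 : G) (H : Subgroup G) :
    (Finset.univ.filter fun q : G × G =>
        q.1 ∈ N ∧ q.2 ∈ N ∧ g1 * q.1 ∈ H ∧ g2 * q.2 ∈ H).card
      = (Finset.univ.filter fun n => n ∈ N ∧ g1 * n ∈ H).card *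
        (Finset.univ.filter fun n => n ∈ N ∧ g2 * n ∈ H).card := by
  rw [← Finset.card_product]
  congr 1
  ext q
  simp only [Finset.mem_filter, Finset.mem_product, Finset.mem_univ, true_and]
  tauto

lemma phiF_main (g1 g2 h1 h2 : G)
    (hg : closure {g1, g2} ⊔ N = ⊤) (hh : closure {h1, h2} ⊔ N = ⊤) :
    ∀ H : Subgroup G, (phiF N g1 g2 H).card = (phiF N h1 h2 H).card := by
  intro H
  refine (wellFounded_lt (α := Subgroup G)).induction
    (C := fun H => (phiF N g1 g2 H).card = (phiF N h1 h2 H).card) H ?_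
  clear H
  intro H IH
  by_cases hH : H ⊔ N = ⊤
  · -- use the counting identity
    have key : ∀ (a b : G), closure {a, b} ⊔ N = ⊤ →
        ∑ K ∈ Finset.univ.filter (· ≤ H), (phiF N a b K).card
          = (Finset.univ.filter fun n => n ∈ N ∧ n ∈ H).card *
            (Finset.univ.filter fun n => n ∈ N ∧ n ∈ H).card := by
      intro a b _
      rw [partitionSum, prodCard, cardA N H a (exists_n0 N hH a),
        cardA N H b (exists_n0 N hH b)]
    have hsplit : (Finset.univ.filter (· ≤ H) : Finset (Subgroup G))
        = insert H (Finset.univ.filter (· < H)) := by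
      ext K
      simp only [Finset.mem_filter, Finset.mem_univ, true_and, Finset.mem_insert]
      constructor
      · intro hK
        rcases lt_or_eq_of_le hK with h | h
        · exact Or.inr h
        · exact Or.inl h
      · rintro (rfl | h)
        · exact le_refl _
        · exact le_of_lt h
    have hnot : H ∉ (Finset.univ.filter (· < H) : Finset (Subgroup G)) := by
      simp [lt_irrefl]
    have hs : ∑ K ∈ Finset.univ.filter (· < H), (phiF N g1 g2 K).card
        = ∑ K ∈ Finset.univ.filter (· < H), (phiF N h1 h2 K).card := by
      apply Finset.sum_congr rfl
      intro K hK
      simp only [Finset.mem_filter, Finset.mem_univ, true_and] at hK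
      exact IH K hK
    have e1 := key g1 g2 hg
    have e2 := key h1 h2 hh
    rw [hsplit, Finset.sum_insert hnot] at e1 e2
    omega
  · -- both sides are empty
    have hempty : ∀ (a b : G), closure {a, b} ⊔ N = ⊤ → phiF N a b H = ∅ := by
      intro a b hab
      rw [Finset.eq_empty_iff_forall_notMem]
      intro q hq
      simp only [phiF, Finset.mem_filter, Finset.mem_univ, true_and] at hq
      obtain ⟨hq1, hq2, hcl⟩ := hq
      apply hH
      rw [← hcl]
      rw [eq_top_iff, ← hab]
      apply sup_le _ le_sup_right
      rw [closure_le]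
      rintro x (rfl | rfl)
      · have hx : x = (x * q.1) * q.1⁻¹ := by group
        rw [hx]
        exact mul_mem (le_sup_left (α := Subgroup G)
          (subset_closure (by simp))) (le_sup_right (α := Subgroup G) (N.inv_mem hq1))
      · have hx : x = (x * q.2) * q.2⁻¹ := by group
        rw [hx]
        exact mul_mem (le_sup_left (α := Subgroup G)
          (subset_closure (by simp))) (le_sup_right (α := Subgroup G) (N.inv_mem hq2))
    rw [hempty g1 g2 hg, hempty h1 h2 hh]

lemma natCard_eq_phiF_top (g1 g2 : G) :
    Nat.card {q : G × G | q.1 ∈ N ∧ q.2 ∈ N ∧ closure {g1 * q.1, g2 * q.2} = ⊤}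
      = (phiF N g1 g2 ⊤).card := by
  rw [Nat.card_eq_card_toFinset]
  congr 1
  ext q
  simp [phiF, Set.mem_toFinset]

end Aux

/-- Let `G` be a finite group, `N` a normal subgroup of `G`, and
`g1, g2, h1, h2 ∈ G` with `⟨g1, g2⟩N = G` and `⟨h1, h2⟩N = G`. Then `Φ_N(g1,g2)` and
`Φ_N(h1,h2)` have the same cardinality. -/
theorem stmt_12 {G : Type*} [Group G] [Finite G] (N : Subgroup G) [N.Normal]
    (g1 g2 h1 h2 : G)
    (hg : Subgroup.closure {g1, g2} ⊔ N = ⊤)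
    (hh : Subgroup.closure {h1, h2} ⊔ N = ⊤) :
    Nat.card {q : G × G | q.1 ∈ N ∧ q.2 ∈ N ∧
        Subgroup.closure {g1 * q.1, g2 * q.2} = ⊤} =
      Nat.card {q : G × G | q.1 ∈ N ∧ q.2 ∈ N ∧
        Subgroup.closure {h1 * q.1, h2 * q.2} = ⊤} := by
  rw [natCard_eq_phiF_top, natCard_eq_phiF_top]
  exact phiF_main N g1 g2 h1 h2 hg hh ⊤
end
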